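/- arXiv:1701.02242 — 8 statements merged into one kernel-verified Lean document; each statement's English description precedes it below -/
import Mathlib

section
/- Let (X,d) be a nonempty complete metric space and T : X → X a map such that for every k ∈ ℕ and all f,g ∈ X one has d(T^k f, T^k g) ≤ α_k · d(f,g), where (α_k) is a sequence of nonnegative reals with ∑_{k=0}^∞ α_k < ∞. Then T has a unique fixed point, and for every f ∈ X the iterates T^k f converge to it. -/
/-!
Since `∑ α_k < ∞`, the steps `d(T^k f₀, T^{k+1} f₀) ≤ α_k d(f₀, T f₀)` are summable, so every orbit
is Cauchy and converges; the limit is fixed because `T` is Lipschitz (take `k = 1`). As `α_k → 0`,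
any two orbits are asymptotic, so all of them share this limit, and a second fixed point,
having a constant orbit, must equal it.
-/

open Filter Function

namespace Function

variable {X : Type*} [PseudoMetricSpace X] {T : X → X} {α : ℕ → ℝ}

theorem cauchySeq_iterate_of_dist_iterate_le (hsum : Summable α)
    (hT : ∀ (k : ℕ) (f g : X), dist (T^[k] f) (T^[k] g) ≤ α k * dist f g) (f : X) :
    CauchySeq (fun k => T^[k] f) :=
  cauchySeq_of_dist_le_of_summable _
    (fun k => by simpa only [iterate_succ_apply] using hT k f (T f)) (hsum.mul_right (dist f (T f)))

theorem tendsto_dist_iterate_of_dist_iterate_le (hα : Tendsto α atTop (nhds 0))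
    (hT : ∀ (k : ℕ) (f g : X), dist (T^[k] f) (T^[k] g) ≤ α k * dist f g) (f g : X) :
    Tendsto (fun k => dist (T^[k] f) (T^[k] g)) atTop (nhds 0) :=
  squeeze_zero (fun _ => dist_nonneg) (hT · f g) (by simpa using hα.mul_const (dist f g))

end Function

theorem weissinger_fixed_point_general {X : Type*} [MetricSpace X] [CompleteSpace X] [Nonempty X]
    (T : X → X) (α : ℕ → ℝ) (hsum : Summable α)
    (hT : ∀ (k : ℕ) (f g : X), dist (T^[k] f) (T^[k] g) ≤ α k * dist f g) :
    ∃ x : X, T x = x ∧ (∀ y : X, T y = y → y = x) ∧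
      ∀ f : X, Tendsto (fun k => T^[k] f) atTop (nhds x) := by
  obtain ⟨f₀⟩ := ‹Nonempty X›
  obtain ⟨x, hx⟩ := cauchySeq_tendsto_of_complete (cauchySeq_iterate_of_dist_iterate_le hsum hT f₀)
  have hT_lipschitz : LipschitzWith (α 1).toNNReal T :=
    LipschitzWith.of_dist_le' fun f g => by simpa only [iterate_one] using hT 1 f g
  have hconv : ∀ f : X, Tendsto (fun k => T^[k] f) atTop (nhds x) := fun f =>
    hx.congr_dist (tendsto_dist_iterate_of_dist_iterate_le hsum.tendsto_atTop_zero hT f₀ f)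
  refine ⟨x, isFixedPt_of_tendsto_iterate hx hT_lipschitz.continuous.continuousAt,
    fun y hy => ?_, hconv⟩
  exact tendsto_nhds_unique (tendsto_const_nhds.congr fun k => (iterate_fixed hy k).symm) (hconv y)

theorem weissinger_fixed_point {X : Type*} [MetricSpace X] [CompleteSpace X] [Nonempty X]
    (T : X → X) (α : ℕ → ℝ) (hα : ∀ k, 0 ≤ α k) (hsum : Summable α)
    (hT : ∀ (k : ℕ) (f g : X), dist (T^[k] f) (T^[k] g) ≤ α k * dist f g) :
    ∃ x : X, T x = x ∧ (∀ y : X, T y = y → y = x) ∧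
      ∀ f : X, Tendsto (fun k => T^[k] f) atTop (nhds x) :=
  weissinger_fixed_point_general T α hsum hT
end

section
/- Let I ⊆ ℝ be an open interval, U ⊆ ℝⁿ open, t₀ ∈ I, x₀ ∈ ℝⁿ, α > 0 with [t₀−α, t₀+α] ⊆ I, and β > 0 with the closed set L_β = L + closedBall(0,β) ⊆ U for a compact set L ⊆ U containing x₀. Let F : I × U → ℝⁿ be continuous, locally Lipschitz in the second variable, and satisfy |F(t,x)| ≤ a for all (t,x) ∈ [t₀−α,t₀+α] × L_β. Let t₁ ∈ [t₀−α,t₀+α] with |t₁−t₀| ≤ δ and let h = min(α, β/a). Then there exists a C¹ solution u : [t₀−h+δ, t₀+h−δ] → L_β of u'(t) = F(t,u(t)) with u(t₁) = x₀, and moreover |u(t) − x₀| ≤ a·|t−t₁| for all t in this interval. -/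
open Set Metric Pointwise Function
open scoped NNReal

/-! On the closed ball of radius `β` about `x₀`, which lies in `L + closedBall 0 β`, the field `F`
is bounded by `a` and Lipschitz in space, so Picard–Lindelöf applies from `t₁` on
`[t₀ - α, t₀ + α] ∩ [t₁ - h, t₁ + h]`, where `a * h ≤ β` keeps the solution in the ball. The
solution is `a`-Lipschitz, which is the displacement bound, and `|t₁ - t₀| ≤ δ` puts the interval
`[t₀ - h + δ, t₀ + h - δ]` inside the interval of existence. -/

lemma closedBall_subset_add_closedBall_zero {E : Type*} [SeminormedAddCommGroup E] {L : Set E}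
    {x : E} (hx : x ∈ L) (r : ℝ) : closedBall x r ⊆ L + closedBall 0 r := by
  rw [← singleton_add_closedBall_zero]
  exact add_subset_add_right (singleton_subset_iff.mpr hx)

lemma Icc_add_sub_subset_Icc_max_min {t₀ t₁ α h δ : ℝ} (hhα : h ≤ α) (ht₁ : |t₁ - t₀| ≤ δ) :
    Icc (t₀ - h + δ) (t₀ + h - δ) ⊆ Icc (max (t₀ - α) (t₁ - h)) (min (t₀ + α) (t₁ + h)) := by
  obtain ⟨h₁, h₂⟩ := abs_le.mp ht₁
  exact Icc_subset_Icc (max_le (by linarith) (by linarith)) (le_min (by linarith) (by linarith))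

namespace IsPicardLindelof

variable {E : Type*} [NormedAddCommGroup E]
  {f : ℝ → E → E} {tmin tmax : ℝ} {t₀ : Icc tmin tmax} {x₀ : E} {a L : ℝ≥0}

lemma of_norm_sub_le {K : ℝ}
    (hcont : ContinuousOn (uncurry f) (Icc tmin tmax ×ˢ closedBall x₀ a))
    (hlip : ∀ t ∈ Icc tmin tmax, ∀ x ∈ closedBall x₀ a, ∀ y ∈ closedBall x₀ a,
      ‖f t x - f t y‖ ≤ K * ‖x - y‖)
    (hnorm : ∀ t ∈ Icc tmin tmax, ∀ x ∈ closedBall x₀ a, ‖f t x‖ ≤ L)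
    (hmax : L * max (tmax - t₀) (t₀ - tmin) ≤ a) :
    IsPicardLindelof f t₀ x₀ a 0 L K.toNNReal where
  lipschitzOnWith t ht := .of_dist_le' fun x hx y hy ↦ by
    simpa only [dist_eq_norm] using hlip t ht x hx y hy
  continuousOn x hx := hcont.uncurry_right x hx
  norm_le := hnorm
  mul_max_le := by rwa [NNReal.coe_zero, sub_zero]

variable [NormedSpace ℝ E] [CompleteSpace E] {K : ℝ≥0}

lemma exists_eq_lipschitzWith_forall_mem_closedBall_hasDerivWithinAt₀
    (hf : IsPicardLindelof f t₀ x₀ a 0 L K) :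
    ∃ α : ℝ → E, α t₀ = x₀ ∧ LipschitzWith L α ∧ (∀ t, α t ∈ closedBall x₀ a) ∧
      ∀ t ∈ Icc tmin tmax, HasDerivWithinAt α (f t (α t)) (Icc tmin tmax) t := by
  obtain ⟨α, hα⟩ := ODE.FunSpace.exists_isFixedPt_next hf (mem_closedBall_self le_rfl)
  refine ⟨α.compProj, ?_, α.lipschitzWith.comp (LipschitzWith.projIcc _) |>.weaken (mul_one L).le,
    fun _ ↦ α.compProj_mem_closedBall hf.mul_max_le, fun t ht ↦ ?_⟩
  · rw [ODE.FunSpace.compProj_val, ← hα, ODE.FunSpace.next_apply₀]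
  · refine ODE.hasDerivWithinAt_picard_Icc t₀.2 hf.continuousOn_uncurry
      α.continuous_compProj.continuousOn (fun _ _ ↦ α.compProj_mem_closedBall hf.mul_max_le)
      x₀ ht |>.congr_of_mem (fun t' ht' ↦ ?_) ht
    nth_rw 1 [← hα]
    rw [ODE.FunSpace.compProj_of_mem ht', ODE.FunSpace.next_apply]

end IsPicardLindelof

theorem picard_existence_fixed_eps_general (n : ℕ)
    (I : Set ℝ)
    (U : Set (EuclideanSpace ℝ (Fin n)))
    (t₀ : ℝ) (x₀ : EuclideanSpace ℝ (Fin n)) (α β a δ : ℝ)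
    (hα : 0 < α) (hβ : 0 < β) (ha : 0 < a)
    (hIcc : Icc (t₀ - α) (t₀ + α) ⊆ I)
    (L : Set (EuclideanSpace ℝ (Fin n)))
    (hx₀ : x₀ ∈ L)
    (hLβ : L + closedBall (0 : EuclideanSpace ℝ (Fin n)) β ⊆ U)
    (F : ℝ → EuclideanSpace ℝ (Fin n) → EuclideanSpace ℝ (Fin n))
    (hFc : ContinuousOn (fun p : ℝ × EuclideanSpace ℝ (Fin n) => F p.1 p.2) (I ×ˢ U))
    (hlip : ∀ K : Set (EuclideanSpace ℝ (Fin n)), IsCompact K → K ⊆ U → ∃ C : ℝ,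
      ∀ t ∈ Icc (t₀ - α) (t₀ + α), ∀ x ∈ K, ∀ y ∈ K, ‖F t x - F t y‖ ≤ C * ‖x - y‖)
    (hbound : ∀ t ∈ Icc (t₀ - α) (t₀ + α),
      ∀ x ∈ L + closedBall (0 : EuclideanSpace ℝ (Fin n)) β, ‖F t x‖ ≤ a)
    (t₁ : ℝ) (ht₁ : t₁ ∈ Icc (t₀ - α) (t₀ + α))
    (ht₁δ : |t₁ - t₀| ≤ δ) :
    ∃ u : ℝ → EuclideanSpace ℝ (Fin n),
      u t₁ = x₀ ∧
      ∀ t ∈ Icc (t₀ - min α (β / a) + δ) (t₀ + min α (β / a) - δ),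
        u t ∈ L + closedBall (0 : EuclideanSpace ℝ (Fin n)) β ∧
        HasDerivWithinAt u (F t (u t))
          (Icc (t₀ - min α (β / a) + δ) (t₀ + min α (β / a) - δ)) t ∧
        ‖u t - x₀‖ ≤ a * |t - t₁| := by
  set h := min α (β / a)
  have hball := closedBall_subset_add_closedBall_zero hx₀ β
  obtain ⟨C, hC⟩ := hlip _ (isCompact_closedBall x₀ β) (hball.trans hLβ)
  have hJα : Icc (max (t₀ - α) (t₁ - h)) (min (t₀ + α) (t₁ + h)) ⊆ Icc (t₀ - α) (t₀ + α) :=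
    Icc_subset_Icc (le_max_left _ _) (min_le_left _ _)
  have hh : 0 ≤ h := le_min hα.le (div_nonneg hβ.le ha.le)
  have ht₁J : t₁ ∈ Icc (max (t₀ - α) (t₁ - h)) (min (t₀ + α) (t₁ + h)) :=
    ⟨max_le ht₁.1 (by linarith), le_min ht₁.2 (by linarith)⟩
  have hah : a * h ≤ β := calc
    a * h ≤ a * (β / a) := mul_le_mul_of_nonneg_left (min_le_right _ _) ha.le
    _ = β := mul_div_cancel₀ β ha.ne'
  have hpl : IsPicardLindelof F ⟨t₁, ht₁J⟩ x₀ ⟨β, hβ.le⟩ 0 ⟨a, ha.le⟩ C.toNNReal :=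
    .of_norm_sub_le (hFc.mono (prod_mono (hJα.trans hIcc) (hball.trans hLβ)))
      (fun t ht ↦ hC t (hJα ht)) (fun t ht x hx ↦ hbound t (hJα ht) x (hball hx))
      ((mul_le_mul_of_nonneg_left (max_le (sub_le_iff_le_add'.mpr (min_le_right _ _))
        (sub_le_comm.mp (le_max_right _ _))) ha.le).trans hah)
  obtain ⟨u, hu₁, hu_lip, hu_ball, hu_deriv⟩ :=
    hpl.exists_eq_lipschitzWith_forall_mem_closedBall_hasDerivWithinAt₀
  have hsub := Icc_add_sub_subset_Icc_max_min (t₁ := t₁) (min_le_left α (β / a)) ht₁δ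
  refine ⟨u, hu₁, fun t ht ↦ ⟨hball (hu_ball t), (hu_deriv t (hsub ht)).mono hsub, ?_⟩⟩
  rw [← hu₁, ← dist_eq_norm, ← Real.dist_eq]
  exact hu_lip.dist_le_mul t t₁

theorem picard_existence_fixed_eps (n : ℕ)
    (I : Set ℝ) (hI : IsOpen I)
    (U : Set (EuclideanSpace ℝ (Fin n))) (hU : IsOpen U)
    (t₀ : ℝ) (x₀ : EuclideanSpace ℝ (Fin n)) (α β a δ : ℝ)
    (hα : 0 < α) (hβ : 0 < β) (ha : 0 < a)
    (hIcc : Icc (t₀ - α) (t₀ + α) ⊆ I)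
    (L : Set (EuclideanSpace ℝ (Fin n))) (hL : IsCompact L) (hLU : L ⊆ U)
    (hx₀ : x₀ ∈ L)
    (hLβ : L + closedBall (0 : EuclideanSpace ℝ (Fin n)) β ⊆ U)
    (F : ℝ → EuclideanSpace ℝ (Fin n) → EuclideanSpace ℝ (Fin n))
    (hFc : ContinuousOn (fun p : ℝ × EuclideanSpace ℝ (Fin n) => F p.1 p.2) (I ×ˢ U))
    (hlip : ∀ K : Set (EuclideanSpace ℝ (Fin n)), IsCompact K → K ⊆ U → ∃ C : ℝ,
      ∀ t ∈ Icc (t₀ - α) (t₀ + α), ∀ x ∈ K, ∀ y ∈ K, ‖F t x - F t y‖ ≤ C * ‖x - y‖)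
    (hbound : ∀ t ∈ Icc (t₀ - α) (t₀ + α),
      ∀ x ∈ L + closedBall (0 : EuclideanSpace ℝ (Fin n)) β, ‖F t x‖ ≤ a)
    (t₁ : ℝ) (ht₁ : t₁ ∈ Icc (t₀ - α) (t₀ + α))
    (hδ0 : 0 ≤ δ) (hδh : δ < min α (β / a)) (ht₁δ : |t₁ - t₀| ≤ δ) :
    ∃ u : ℝ → EuclideanSpace ℝ (Fin n),
      u t₁ = x₀ ∧
      ∀ t ∈ Icc (t₀ - min α (β / a) + δ) (t₀ + min α (β / a) - δ),
        u t ∈ L + closedBall (0 : EuclideanSpace ℝ (Fin n)) β ∧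
        HasDerivWithinAt u (F t (u t))
          (Icc (t₀ - min α (β / a) + δ) (t₀ + min α (β / a) - δ)) t ∧
        ‖u t - x₀‖ ≤ a * |t - t₁| :=
  picard_existence_fixed_eps_general n I U t₀ x₀ α β a δ hα hβ ha hIcc L hx₀ hLβ F hFc hlip hbound
    t₁ ht₁ ht₁δ
end

section
/- Let h > 0, C₂, C₃, C₄ > 0, and m ∈ ℕ. Suppose for each ε ∈ (0,1] that w_ε : J → ℝ is a nonnegative continuous function on an interval J of length at most 2h containing a point t_ε, satisfying w_ε(t) ≤ C₂ ε^m + (C₃ + C₄|log ε|)·|∫_{t_ε}^t w_ε(s) ds| for all t ∈ J. Then there is a constant C₀ > 0 such that sup_{t ∈ J} w_ε(t) ≤ C₀ ε^{m − 2h·C₄} for all ε ∈ (0,1]. -/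
/-!
The primitive `F t = ∫ s in c..t, w s` of the nonnegative function `w` satisfies
`|F'| = w ≤ δ + K |F|`, so Grönwall's inequality (applied on each side of `c`) gives
`δ + K |F t| ≤ δ exp (K |t - c|)`. With `δ = C₂ ε ^ m`, `K = C₃ + C₄ |log ε|` and `|t - c| ≤ 2h`,
the factor `exp (2h C₄ |log ε|)` is exactly `ε ^ (-2h C₄)` because `log ε ≤ 0`.
-/

open Set

theorem ContinuousOn.exists_continuous_eqOn_Icc {α β : Type*} [LinearOrder α] [TopologicalSpace α]
    [OrderTopology α] [TopologicalSpace β] {f : α → β} {a b : α} (hab : a ≤ b)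
    (hf : ContinuousOn f (Icc a b)) : ∃ g : α → β, Continuous g ∧ EqOn g f (Icc a b) :=
  ⟨IccExtend hab ((Icc a b).domRestrict f), continuous_IccExtend_iff.2 hf.domRestrict,
    fun _ hx => IccExtend_of_mem hab _ hx⟩

theorem add_mul_gronwallBound_zero (δ K x : ℝ) :
    δ + K * gronwallBound 0 K δ x = δ * Real.exp (K * x) := by
  rcases eq_or_ne K 0 with rfl | hK
  · simp
  · rw [gronwallBound_of_K_ne_0 hK]
    field_simp
    ring

theorem abs_integral_le_gronwallBound_of_le_right {W : ℝ → ℝ} {c b δ K : ℝ} (hW : Continuous W)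
    (hW0 : ∀ t ∈ Icc c b, 0 ≤ W t)
    (hineq : ∀ t ∈ Icc c b, W t ≤ δ + K * |∫ s in c..t, W s|) :
    ∀ t ∈ Icc c b, |∫ s in c..t, W s| ≤ gronwallBound 0 K δ (t - c) := by
  have hderiv (x : ℝ) : HasDerivAt (fun u => ∫ s in c..u, W s) (W x) x :=
    (hW.integral_hasStrictDerivAt c x).hasDerivAt
  refine norm_le_gronwallBound_of_norm_deriv_right_le
    (fun x _ => (hderiv x).continuousAt.continuousWithinAt) (fun x _ => (hderiv x).hasDerivWithinAt)
    (by simp) fun x hx => ?_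
  rw [Real.norm_eq_abs, Real.norm_eq_abs, abs_of_nonneg (hW0 x (Ico_subset_Icc_self hx))]
  linarith [hineq x (Ico_subset_Icc_self hx)]

theorem abs_integral_le_gronwallBound_of_le_left {W : ℝ → ℝ} {a c δ K : ℝ} (hW : Continuous W)
    (hW0 : ∀ t ∈ Icc a c, 0 ≤ W t)
    (hineq : ∀ t ∈ Icc a c, W t ≤ δ + K * |∫ s in c..t, W s|) :
    ∀ t ∈ Icc a c, |∫ s in c..t, W s| ≤ gronwallBound 0 K δ (c - t) := by
  have hreflect (t : ℝ) : |∫ s in -c..t, W (-s)| = |∫ s in c..-t, W s| := by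
    rw [intervalIntegral.integral_comp_neg, neg_neg, intervalIntegral.integral_symm, abs_neg]
  intro t ht
  have key := abs_integral_le_gronwallBound_of_le_right (c := -c) (b := -a) (hW.comp continuous_neg)
    (fun s hs => hW0 (-s) ⟨le_neg.1 hs.2, neg_le.1 hs.1⟩)
    (fun s hs => by
      rw [Function.comp_def, hreflect]
      exact hineq (-s) ⟨le_neg.1 hs.2, neg_le.1 hs.1⟩) (-t) ⟨neg_le_neg ht.2, neg_le_neg ht.1⟩
  rwa [Function.comp_def, hreflect, neg_neg, sub_neg_eq_add, neg_add_eq_sub] at key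

theorem le_mul_exp_of_le_add_mul_abs_integral {W : ℝ → ℝ} {a b c δ K : ℝ}
    (hW : ContinuousOn W (Icc a b)) (hW0 : ∀ t ∈ Icc a b, 0 ≤ W t) (hc : c ∈ Icc a b)
    (hK : 0 ≤ K) (hineq : ∀ t ∈ Icc a b, W t ≤ δ + K * |∫ s in c..t, W s|) :
    ∀ t ∈ Icc a b, W t ≤ δ * Real.exp (K * |t - c|) := by
  obtain ⟨V, hV, hVW⟩ := hW.exists_continuous_eqOn_Icc (hc.1.trans hc.2)
  have hint : ∀ t ∈ Icc a b, ∫ s in c..t, V s = ∫ s in c..t, W s := fun t ht =>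
    intervalIntegral.integral_congr (hVW.mono (uIcc_subset_Icc hc ht))
  have hV0 : ∀ t ∈ Icc a b, 0 ≤ V t := fun t ht => hVW ht ▸ hW0 t ht
  have hVineq : ∀ t ∈ Icc a b, V t ≤ δ + K * |∫ s in c..t, V s| := fun t ht => by
    rw [hVW ht, hint t ht]
    exact hineq t ht
  have hbound : ∀ t ∈ Icc a b, |∫ s in c..t, W s| ≤ gronwallBound 0 K δ |t - c| := by
    intro t ht
    rw [← hint t ht]
    rcases le_total c t with hct | htc
    · rw [abs_of_nonneg (sub_nonneg.2 hct)]
      exact abs_integral_le_gronwallBound_of_le_right hV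
        (fun s hs => hV0 s (Icc_subset_Icc_left hc.1 hs))
        (fun s hs => hVineq s (Icc_subset_Icc_left hc.1 hs)) t ⟨hct, ht.2⟩
    · rw [abs_of_nonpos (sub_nonpos.2 htc), neg_sub]
      exact abs_integral_le_gronwallBound_of_le_left hV
        (fun s hs => hV0 s (Icc_subset_Icc_right hc.2 hs))
        (fun s hs => hVineq s (Icc_subset_Icc_right hc.2 hs)) t ⟨ht.1, htc⟩
  intro t ht
  calc W t ≤ δ + K * |∫ s in c..t, W s| := hineq t ht
    _ ≤ δ + K * gronwallBound 0 K δ |t - c| := by gcongr; exact hbound t ht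
    _ = δ * Real.exp (K * |t - c|) := add_mul_gronwallBound_zero δ K _

theorem exp_add_mul_abs_log_mul {ε : ℝ} (hε : ε ∈ Ioc 0 1) (A B L : ℝ) :
    Real.exp ((A + B * |Real.log ε|) * L) = Real.exp (L * A) * ε ^ (-(L * B)) := by
  rw [abs_of_nonpos (Real.log_nonpos hε.1.le hε.2), Real.rpow_def_of_pos hε.1, ← Real.exp_add]
  ring_nf

theorem log_gronwall_polynomial_bound_general (h C₂ C₃ C₄ : ℝ) (m : ℕ)
    (hC₂ : 0 < C₂) (hC₃ : 0 < C₃) (hC₄ : 0 < C₄)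
    (aa bb tc : ℝ → ℝ) (w : ℝ → ℝ → ℝ)
    (hlen : ∀ ε ∈ Ioc (0:ℝ) 1, bb ε - aa ε ≤ 2 * h)
    (htc : ∀ ε ∈ Ioc (0:ℝ) 1, tc ε ∈ Icc (aa ε) (bb ε))
    (hw0 : ∀ ε ∈ Ioc (0:ℝ) 1, ∀ t ∈ Icc (aa ε) (bb ε), 0 ≤ w ε t)
    (hwc : ∀ ε ∈ Ioc (0:ℝ) 1, ContinuousOn (w ε) (Icc (aa ε) (bb ε)))
    (hineq : ∀ ε ∈ Ioc (0:ℝ) 1, ∀ t ∈ Icc (aa ε) (bb ε),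
      w ε t ≤ C₂ * ε ^ m + (C₃ + C₄ * |Real.log ε|) * |∫ s in tc ε..t, w ε s|) :
    ∃ C₀ > 0, ∀ ε ∈ Ioc (0:ℝ) 1, ∀ t ∈ Icc (aa ε) (bb ε),
      w ε t ≤ C₀ * ε ^ ((m : ℝ) - 2 * h * C₄) := by
  refine ⟨C₂ * Real.exp (2 * h * C₃), by positivity, fun ε hε t ht => ?_⟩
  have hK : 0 ≤ C₃ + C₄ * |Real.log ε| := by positivity
  have hdist : |t - tc ε| ≤ 2 * h :=
    (Real.dist_le_of_mem_Icc ht (htc ε hε)).trans (hlen ε hε)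
  calc w ε t ≤ C₂ * ε ^ m * Real.exp ((C₃ + C₄ * |Real.log ε|) * |t - tc ε|) :=
        le_mul_exp_of_le_add_mul_abs_integral (hwc ε hε) (hw0 ε hε) (htc ε hε) hK (hineq ε hε) t ht
    _ ≤ C₂ * ε ^ m * Real.exp ((C₃ + C₄ * |Real.log ε|) * (2 * h)) := by
        have := hε.1
        gcongr
    _ = C₂ * Real.exp (2 * h * C₃) * ε ^ ((m : ℝ) - 2 * h * C₄) := by
        rw [exp_add_mul_abs_log_mul hε, sub_eq_add_neg, Real.rpow_add hε.1, Real.rpow_natCast]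
        ring

theorem log_gronwall_polynomial_bound (h C₂ C₃ C₄ : ℝ) (m : ℕ)
    (hh : 0 < h) (hC₂ : 0 < C₂) (hC₃ : 0 < C₃) (hC₄ : 0 < C₄)
    (aa bb tc : ℝ → ℝ) (w : ℝ → ℝ → ℝ)
    (hab : ∀ ε ∈ Ioc (0:ℝ) 1, aa ε ≤ bb ε)
    (hlen : ∀ ε ∈ Ioc (0:ℝ) 1, bb ε - aa ε ≤ 2 * h)
    (htc : ∀ ε ∈ Ioc (0:ℝ) 1, tc ε ∈ Icc (aa ε) (bb ε))
    (hw0 : ∀ ε ∈ Ioc (0:ℝ) 1, ∀ t ∈ Icc (aa ε) (bb ε), 0 ≤ w ε t)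
    (hwc : ∀ ε ∈ Ioc (0:ℝ) 1, ContinuousOn (w ε) (Icc (aa ε) (bb ε)))
    (hineq : ∀ ε ∈ Ioc (0:ℝ) 1, ∀ t ∈ Icc (aa ε) (bb ε),
      w ε t ≤ C₂ * ε ^ m + (C₃ + C₄ * |Real.log ε|) * |∫ s in tc ε..t, w ε s|) :
    ∃ C₀ > 0, ∀ ε ∈ Ioc (0:ℝ) 1, ∀ t ∈ Icc (aa ε) (bb ε),
      w ε t ≤ C₀ * ε ^ ((m : ℝ) - 2 * h * C₄) :=
  log_gronwall_polynomial_bound_general h C₂ C₃ C₄ m hC₂ hC₃ hC₄ aa bb tc w hlen htc hw0 hwc hineq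
end

section
/- Suppose for (t,x) ∈ J̄ × K (J̄ a compact interval of length 2h, K compact) one has |∂_p F_ε(t,x,p)| ≤ C₁ ε^{−N₁} and |∂_x F_ε(t,x,p)| ≤ C₂ |log ε| for all ε ∈ (0,1], and u_ε(p,·) solves ∂_t u_ε(p,t) = F_ε(t, u_ε(p,t), p), u_ε(p,t₁) = x₁, with values in K. Then |∂_p u_ε(p,t)| ≤ (2h·C₁)·ε^{−(N₁ + 2h·C₂)} for all t ∈ J̄, p, and ε ∈ (0,1]. -/
/-!
The candidate for `∂ₚu` is the solution `D` of the variational equation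
`D' = ∂ₓF · D + ∂ₚF`, `D t₁ = 0`, along `u p`; it exists on the whole interval because the
equation is linear (Picard–Lindelöf on steps of uniform length, glued together). Grönwall's
inequality applied to `u q - u p - D (q - p)`, whose derivative is `∂ₓF` applied to itself plus
the linearisation error of `F`, and the uniform differentiability of `F` on a compact convex set
show that `D` is the Fréchet derivative. Grönwall applied to `D` itself gives
`‖D‖ ≤ 2h C₁ ε^(-N₁) exp (2h C₂ |log ε|)`, and `exp (2h C₂ |log ε|) = ε^(-2h C₂)` for `ε ≤ 1`.
-/

open Set Metric
open scoped NNReal Topology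

section Gronwall

variable {E : Type*} [NormedAddCommGroup E] [NormedSpace ℝ E]

theorem norm_le_gronwallBound_of_norm_deriv_left_le {f f' : ℝ → E} {δ K ε a b : ℝ}
    (hf : ContinuousOn f (Icc a b)) (hf' : ∀ x ∈ Ioc a b, HasDerivWithinAt f (f' x) (Iic x) x)
    (hb : ‖f b‖ ≤ δ) (bound : ∀ x ∈ Ioc a b, ‖f' x‖ ≤ K * ‖f x‖ + ε) :
    ∀ x ∈ Icc a b, ‖f x‖ ≤ gronwallBound δ K ε (b - x) := by
  have hneg : ∀ x ∈ Icc (-b) (-a), -x ∈ Icc a b :=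
    fun x hx => ⟨by linarith [hx.2], by linarith [hx.1]⟩
  have key := norm_le_gronwallBound_of_norm_deriv_right_le (f := fun x => f (-x))
    (f' := fun x => -f' (-x)) (a := -b) (b := -a)
    (hf.comp continuousOn_neg hneg)
    (fun x hx => by
      have h := hf' (-x) ⟨by linarith [hx.2], by linarith [hx.1]⟩
      simpa [Function.comp_def] using h.scomp (s := Ici x) x (hasDerivAt_neg x).hasDerivWithinAt
        fun y (hy : x ≤ y) => show -y ≤ -x from neg_le_neg hy)
    (by simpa using hb)
    (fun x hx => by simpa using bound (-x) ⟨by linarith [hx.2], by linarith [hx.1]⟩)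
  intro x hx
  simpa [sub_eq_add_neg, add_comm] using key (-x) ⟨neg_le_neg hx.2, neg_le_neg hx.1⟩

theorem norm_le_gronwallBound_of_hasDerivWithinAt_Icc {f f' : ℝ → E} {δ K ε a b t₀ : ℝ}
    (hδ : 0 ≤ δ) (hK : 0 ≤ K) (hε : 0 ≤ ε) (ht₀ : t₀ ∈ Icc a b)
    (hf : ∀ t ∈ Icc a b, HasDerivWithinAt f (f' t) (Icc a b) t) (h₀ : ‖f t₀‖ ≤ δ)
    (bound : ∀ t ∈ Icc a b, ‖f' t‖ ≤ K * ‖f t‖ + ε) :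
    ∀ t ∈ Icc a b, ‖f t‖ ≤ gronwallBound δ K ε (b - a) := by
  have hcont : ContinuousOn f (Icc a b) := fun t ht => (hf t ht).continuousWithinAt
  have hmono := gronwallBound_mono hδ hε hK
  intro t ht
  rcases le_total t₀ t with htt₀ | htt₀
  · have hsub : Icc t₀ b ⊆ Icc a b := Icc_subset_Icc ht₀.1 le_rfl
    refine (norm_le_gronwallBound_of_norm_deriv_right_le (hcont.mono hsub)
      (fun x hx => (hf x (hsub (Ico_subset_Icc_self hx))).mono_of_mem_nhdsWithin
        (Icc_mem_nhdsGE_of_mem ⟨ht₀.1.trans hx.1, hx.2⟩))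
      h₀ (fun x hx => bound x (hsub (Ico_subset_Icc_self hx))) t ⟨htt₀, ht.2⟩).trans
      (hmono (by linarith [ht₀.1, ht.2]))
  · have hsub : Icc a t₀ ⊆ Icc a b := Icc_subset_Icc le_rfl ht₀.2
    refine (norm_le_gronwallBound_of_norm_deriv_left_le (hcont.mono hsub)
      (fun x hx => (hf x (hsub (Ioc_subset_Icc_self hx))).mono_of_mem_nhdsWithin
        (Icc_mem_nhdsLE_of_mem ⟨hx.1, hx.2.trans ht₀.2⟩))
      h₀ (fun x hx => bound x (hsub (Ioc_subset_Icc_self hx))) t ⟨ht.1, htt₀⟩).trans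
      (hmono (by linarith [ht₀.2, ht.1]))

end Gronwall

theorem gronwallBound_zero_le {K ε x : ℝ} (hK : 0 ≤ K) (hε : 0 ≤ ε) :
    gronwallBound 0 K ε x ≤ ε * x * Real.exp (K * x) := by
  rcases hK.eq_or_lt with rfl | hK
  · simp [gronwallBound_K0]
  · have hexp : Real.exp (K * x) - 1 ≤ K * x * Real.exp (K * x) := by
      have h := Real.add_one_le_exp (-(K * x))
      rw [Real.exp_neg] at h
      have hpos := Real.exp_pos (K * x)
      field_simp at h
      nlinarith
    simp only [gronwallBound_of_K_ne_0 hK.ne', zero_mul, zero_add]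
    rw [div_mul_eq_mul_div, div_le_iff₀ hK]
    calc ε * (Real.exp (K * x) - 1) ≤ ε * (K * x * Real.exp (K * x)) := by gcongr
      _ = ε * x * Real.exp (K * x) * K := by ring

theorem Real.exp_mul_abs_log {ε : ℝ} (hε : ε ∈ Ioc 0 1) (c : ℝ) :
    Real.exp (c * |Real.log ε|) = ε ^ (-c) := by
  rw [abs_of_nonpos (Real.log_nonpos hε.1.le hε.2), Real.rpow_def_of_pos hε.1]
  ring_nf

section Existence

variable {H : Type*} [NormedAddCommGroup H] [NormedSpace ℝ H] {V : ℝ → H → H}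

def IVPSolvableOn (V : ℝ → H → H) (s : Set ℝ) : Prop :=
  ∀ t₀ ∈ s, ∀ x₀ : H, ∃ f : ℝ → H, f t₀ = x₀ ∧ IsIntegralCurveOn f V s

theorem IsIntegralCurveOn.ite_Icc {f g : ℝ → H} {a c b : ℝ} (hac : a ≤ c) (hcb : c ≤ b)
    (hf : IsIntegralCurveOn f V (Icc a c)) (hg : IsIntegralCurveOn g V (Icc c b))
    (hfg : f c = g c) :
    IsIntegralCurveOn (fun t => if t ≤ c then f t else g t) V (Icc a b) := by
  set k : ℝ → H := fun t => if t ≤ c then f t else g t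
  have hkf : ∀ t ≤ c, k t = f t := fun t ht => if_pos ht
  have hkg : ∀ t, c ≤ t → k t = g t := fun t ht => by
    rcases ht.eq_or_lt with rfl | ht
    · exact (hkf c le_rfl).trans hfg
    · exact if_neg (not_le.2 ht)
  intro t ht
  rw [← Icc_union_Icc_eq_Icc hac hcb]
  refine HasDerivWithinAt.union ?_ ?_
  · by_cases htc : t ≤ c
    · rw [hkf t htc]
      exact (hf t ⟨ht.1, htc⟩).congr (fun y hy => hkf y hy.2) (hkf t htc)
    · exact HasFDerivWithinAt.of_notMem_closure (by rw [closure_Icc]; exact fun h => htc h.2)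
  · by_cases hct : c ≤ t
    · rw [hkg t hct]
      exact (hg t ⟨hct, ht.2⟩).congr (fun y hy => hkg y hy.1) (hkg t hct)
    · exact HasFDerivWithinAt.of_notMem_closure (by rw [closure_Icc]; exact fun h => hct h.1)

theorem IVPSolvableOn.Icc_union {a c b : ℝ} (hac : a ≤ c) (hcb : c ≤ b)
    (h₁ : IVPSolvableOn V (Icc a c)) (h₂ : IVPSolvableOn V (Icc c b)) :
    IVPSolvableOn V (Icc a b) := by
  intro t₀ ht₀ x₀
  by_cases ht₀c : t₀ ≤ c
  · obtain ⟨f, hf₀, hf⟩ := h₁ t₀ ⟨ht₀.1, ht₀c⟩ x₀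
    obtain ⟨g, hgc, hg⟩ := h₂ c ⟨le_rfl, hcb⟩ (f c)
    exact ⟨_, by simp [ht₀c, hf₀], hf.ite_Icc hac hcb hg hgc.symm⟩
  · obtain ⟨g, hg₀, hg⟩ := h₂ t₀ ⟨(not_le.1 ht₀c).le, ht₀.2⟩ x₀
    obtain ⟨f, hfc, hf⟩ := h₁ c ⟨hac, le_rfl⟩ (g c)
    exact ⟨_, by simp [ht₀c, hg₀], hf.ite_Icc hac hcb hg hfc⟩

variable [CompleteSpace H] {K : ℝ≥0}

theorem ivpSolvableOn_Icc_of_two_mul_le {c d : ℝ} (hlip : ∀ t ∈ Icc c d, LipschitzWith K (V t))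
    (hcont : ∀ x, ContinuousOn (V · x) (Icc c d)) (hV₀ : ∀ t ∈ Icc c d, ‖V t 0‖ ≤ K)
    (hcd : 2 * K * (d - c) ≤ 1) : IVPSolvableOn V (Icc c d) := by
  intro t₀ ht₀ x₀
  -- On the ball of radius `‖x₀‖ + 1` about `x₀` the field is bounded by `2K (‖x₀‖ + 1)`, so the
  -- admissible step length `1 / (2K)` does not depend on `x₀`.
  have hPL : IsPicardLindelof V ⟨t₀, ht₀⟩ x₀ (‖x₀‖₊ + 1) 0 (2 * K * (‖x₀‖₊ + 1)) K := by
    refine ⟨fun t ht => (hlip t ht).lipschitzOnWith, fun x _ => hcont x, ?_, ?_⟩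
    · intro t ht x hx
      have hx' : ‖x‖ ≤ 2 * ‖x₀‖ + 1 := by
        have := norm_le_norm_add_norm_sub' x x₀
        have := mem_closedBall_iff_norm.1 hx
        push_cast at *
        linarith
      have hVx : ‖V t x‖ ≤ K * ‖x‖ + K := by
        have := (hlip t ht).norm_sub_le x 0
        rw [sub_zero] at this
        linarith [norm_le_norm_add_norm_sub' (V t x) (V t 0), norm_sub_rev (V t x) (V t 0),
          hV₀ t ht]
      push_cast
      nlinarith [K.2, norm_nonneg x₀]
    · push_cast
      have hmax : max (d - t₀) (t₀ - c) ≤ d - c :=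
        max_le (by linarith [ht₀.1]) (by linarith [ht₀.2])
      have hpos : (0 : ℝ) ≤ ‖x₀‖ + 1 := by positivity
      calc 2 * K * (‖x₀‖ + 1) * max (d - t₀) (t₀ - c) ≤ 2 * K * (d - c) * (‖x₀‖ + 1) := by
            rw [mul_right_comm]; gcongr
        _ ≤ ‖x₀‖ + 1 - 0 := by nlinarith
  exact hPL.exists_eq_forall_mem_Icc_hasDerivWithinAt₀

theorem ivpSolvableOn_Icc {a b : ℝ} (hlip : ∀ t ∈ Icc a b, LipschitzWith K (V t))
    (hcont : ∀ x, ContinuousOn (V · x) (Icc a b)) (hV₀ : ∀ t ∈ Icc a b, ‖V t 0‖ ≤ K) :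
    IVPSolvableOn V (Icc a b) := by
  set τ : ℝ := (2 * K + 1)⁻¹
  have hτ : 0 < τ := by positivity
  have short : ∀ c d, a ≤ c → d ≤ b → d - c ≤ τ → IVPSolvableOn V (Icc c d) := by
    intro c d hac hdb hcd
    have hsub : Icc c d ⊆ Icc a b := Icc_subset_Icc hac hdb
    refine ivpSolvableOn_Icc_of_two_mul_le (fun t ht => hlip t (hsub ht))
      (fun x => (hcont x).mono hsub) (fun t ht => hV₀ t (hsub ht)) ?_
    calc 2 * K * (d - c) ≤ 2 * K * τ := by gcongr
      _ ≤ 1 := by rw [← div_eq_mul_inv, div_le_one (by positivity)]; linarith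
  have long : ∀ n : ℕ, ∀ d ≤ b, d - a ≤ (n + 1) * τ → IVPSolvableOn V (Icc a d) := by
    intro n
    induction n with
    | zero => exact fun d hdb hd => short a d le_rfl hdb (by simpa using hd)
    | succ n ih =>
      intro d hdb hd
      rcases lt_or_ge d a with hda | had
      · intro t₀ ht₀
        exact absurd (ht₀.1.trans ht₀.2) (not_le.2 hda)
      have hm : max a (d - τ) - a ≤ (n + 1) * τ :=
        sub_left_le_of_le_add (max_le (by nlinarith) (by push_cast at hd; linarith))
      exact (ih _ (max_le (had.trans hdb) (by linarith)) hm).Icc_union (le_max_left _ _)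
        (max_le had (by linarith))
        (short _ d (le_max_left _ _) hdb (by linarith [le_max_right a (d - τ)]))
  obtain ⟨n, hn⟩ := exists_nat_gt ((b - a) / τ)
  rw [div_lt_iff₀ hτ] at hn
  exact long n b le_rfl (by nlinarith)

end Existence

section Partial

variable {E F H : Type*} [NormedAddCommGroup E] [NormedSpace ℝ E] [NormedAddCommGroup F]
  [NormedSpace ℝ F] [NormedAddCommGroup H] [NormedSpace ℝ H] {G : ℝ × E × F → H}
  {s : ℝ} {x : E} {q : F}

theorem fderiv_fun_mk_middle (hG : DifferentiableAt ℝ G (s, x, q)) :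
    fderiv ℝ (fun y => G (s, y, q)) x =
      (fderiv ℝ G (s, x, q)).comp
        ((ContinuousLinearMap.inr ℝ ℝ (E × F)).comp (ContinuousLinearMap.inl ℝ E F)) :=
  (hG.hasFDerivAt.comp x
    ((hasFDerivAt_prodMk_right s (x, q)).comp x (hasFDerivAt_prodMk_left x q))).fderiv

theorem fderiv_fun_mk_last (hG : DifferentiableAt ℝ G (s, x, q)) :
    fderiv ℝ (fun v => G (s, x, v)) q =
      (fderiv ℝ G (s, x, q)).comp
        ((ContinuousLinearMap.inr ℝ ℝ (E × F)).comp (ContinuousLinearMap.inr ℝ E F)) :=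
  (hG.hasFDerivAt.comp q
    ((hasFDerivAt_prodMk_right s (x, q)).comp q (hasFDerivAt_prodMk_right x q))).fderiv

end Partial

section Variational

variable {E F : Type*} [NormedAddCommGroup E] [NormedSpace ℝ E] [NormedAddCommGroup F]
  [NormedSpace ℝ F] {G : ℝ × E × F → E} {γ : ℝ → E} {p : F}

/-- The variational equation `X' = ∂ₓG(s, γ s, p) ∘ X + ∂ₚG(s, γ s, p)` along the solution `γ`. -/
noncomputable def variationalField (G : ℝ × E × F → E) (γ : ℝ → E) (p : F) (s : ℝ)
    (X : F →L[ℝ] E) : F →L[ℝ] E :=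
  (fderiv ℝ (fun y => G (s, y, p)) (γ s)).comp X + fderiv ℝ (fun q => G (s, γ s, q)) p

theorem variationalField_apply {s : ℝ} (hG : DifferentiableAt ℝ G (s, γ s, p))
    (X : F →L[ℝ] E) (v : F) :
    variationalField G γ p s X v = fderiv ℝ G (s, γ s, p) (0, X v, v) := by
  simp [variationalField, fderiv_fun_mk_middle hG, fderiv_fun_mk_last hG, ← map_add]

theorem exists_isIntegralCurveOn_variationalField [CompleteSpace E] (hG : ContDiff ℝ 1 G)
    {a b t₁ : ℝ} (hγ : ContinuousOn γ (Icc a b)) (ht₁ : t₁ ∈ Icc a b) :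
    ∃ D : ℝ → F →L[ℝ] E, D t₁ = 0 ∧ IsIntegralCurveOn D (variationalField G γ p) (Icc a b) := by
  have hG' : ∀ z, DifferentiableAt ℝ G z := fun z => (hG.differentiable one_ne_zero) z
  have hdG : ContinuousOn (fun s => fderiv ℝ G (s, γ s, p)) (Icc a b) :=
    (hG.continuous_fderiv one_ne_zero).comp_continuousOn
      (continuousOn_id.prodMk (hγ.prodMk continuousOn_const))
  set A : ℝ → E →L[ℝ] E := fun s => fderiv ℝ (fun y => G (s, y, p)) (γ s)
  set B : ℝ → F →L[ℝ] E := fun s => fderiv ℝ (fun q => G (s, γ s, q)) p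
  have hA : ContinuousOn A (Icc a b) := by
    simpa only [A, fderiv_fun_mk_middle (hG' _)] using hdG.clm_comp continuousOn_const
  have hB : ContinuousOn B (Icc a b) := by
    simpa only [B, fderiv_fun_mk_last (hG' _)] using hdG.clm_comp continuousOn_const
  obtain ⟨MA, hMA⟩ := isCompact_Icc.exists_bound_of_continuousOn hA
  obtain ⟨MB, hMB⟩ := isCompact_Icc.exists_bound_of_continuousOn hB
  set M : ℝ≥0 := (max MA MB).toNNReal
  have hAM : ∀ s ∈ Icc a b, ‖A s‖ ≤ M := fun s hs =>
    (hMA s hs).trans ((le_max_left _ _).trans (Real.le_coe_toNNReal _))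
  have hBM : ∀ s ∈ Icc a b, ‖B s‖ ≤ M := fun s hs =>
    (hMB s hs).trans ((le_max_right _ _).trans (Real.le_coe_toNNReal _))
  refine ivpSolvableOn_Icc (V := variationalField G γ p) (K := M)
    (fun s hs => LipschitzWith.of_dist_le_mul fun X Y => ?_)
    (fun X => (hA.clm_comp continuousOn_const).add hB)
    (fun s hs => by simpa [variationalField] using hBM s hs) t₁ ht₁ 0
  have hXY : variationalField G γ p s X - variationalField G γ p s Y = (A s).comp (X - Y) := by
    simp [variationalField, A, ContinuousLinearMap.comp_sub]
  rw [dist_eq_norm, dist_eq_norm, hXY]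
  exact (ContinuousLinearMap.opNorm_comp_le _ _).trans (by gcongr; exact hAM s hs)

theorem norm_sub_sub_variationalField_le {s : ℝ} (hG : DifferentiableAt ℝ G (s, γ s, p))
    (X : F →L[ℝ] E) (y : E) (q : F) :
    ‖G (s, y, q) - G (s, γ s, p) - variationalField G γ p s X (q - p)‖ ≤
      ‖G (s, y, q) - G (s, γ s, p) - fderiv ℝ G (s, γ s, p) ((s, y, q) - (s, γ s, p))‖ +
        ‖fderiv ℝ G (s, γ s, p)‖ * ‖y - γ s - X (q - p)‖ := by
  set L := fderiv ℝ G (s, γ s, p)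
  have hsplit : G (s, y, q) - G (s, γ s, p) - variationalField G γ p s X (q - p) =
      (G (s, y, q) - G (s, γ s, p) - L ((s, y, q) - (s, γ s, p))) +
        L (0, y - γ s - X (q - p), 0) := by
    have hL : L (0, y - γ s, q - p) = L (0, y - γ s - X (q - p), 0) + L (0, X (q - p), q - p) := by
      rw [← map_add]; simp
    rw [variationalField_apply hG, Prod.mk_sub_mk, Prod.mk_sub_mk, sub_self, hL]
    abel
  rw [hsplit]
  refine (norm_add_le _ _).trans (add_le_add le_rfl ((L.le_opNorm _).trans_eq ?_))
  simp [Prod.norm_mk]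

theorem norm_le_of_isIntegralCurveOn_variationalField {a b t₁ Lx Lp : ℝ} (ht₁ : t₁ ∈ Icc a b)
    {D : ℝ → F →L[ℝ] E} (hD₁ : D t₁ = 0)
    (hD : IsIntegralCurveOn D (variationalField G γ p) (Icc a b))
    (hA : ∀ s ∈ Icc a b, ‖fderiv ℝ (fun y => G (s, y, p)) (γ s)‖ ≤ Lx)
    (hB : ∀ s ∈ Icc a b, ‖fderiv ℝ (fun q => G (s, γ s, q)) p‖ ≤ Lp) :
    ∀ t ∈ Icc a b, ‖D t‖ ≤ Lp * (b - a) * Real.exp (Lx * (b - a)) := by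
  have hLx : 0 ≤ Lx := (norm_nonneg _).trans (hA t₁ ht₁)
  have hLp : 0 ≤ Lp := (norm_nonneg _).trans (hB t₁ ht₁)
  intro t ht
  refine (norm_le_gronwallBound_of_hasDerivWithinAt_Icc le_rfl hLx hLp ht₁ hD
    (by simp [hD₁]) (fun s hs => ?_) t ht).trans (gronwallBound_zero_le hLx hLp)
  calc ‖variationalField G γ p s (D s)‖
      ≤ ‖fderiv ℝ (fun y => G (s, y, p)) (γ s)‖ * ‖D s‖ + ‖fderiv ℝ (fun q => G (s, γ s, q)) p‖ :=
        (norm_add_le _ _).trans (add_le_add_left (ContinuousLinearMap.opNorm_comp_le _ _) _)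
    _ ≤ Lx * ‖D s‖ + Lp := by gcongr; exacts [hA s hs, hB s hs]

end Variational

theorem IsCompact.exists_forall_norm_sub_sub_fderiv_le {X Y : Type*} [NormedAddCommGroup X]
    [NormedSpace ℝ X] [NormedAddCommGroup Y] [NormedSpace ℝ Y] {G : X → Y} (hG : ContDiff ℝ 1 G)
    {S : Set X} (hS : IsCompact S) (hSc : Convex ℝ S) {η : ℝ} (hη : 0 < η) :
    ∃ ρ > 0, ∀ z₀ ∈ S, ∀ z ∈ S, ‖z - z₀‖ < ρ →
      ‖G z - G z₀ - fderiv ℝ G z₀ (z - z₀)‖ ≤ η * ‖z - z₀‖ := by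
  obtain ⟨ρ, hρ, hUC⟩ := Metric.uniformContinuousOn_iff.1
    (hS.uniformContinuousOn_of_continuous (hG.continuous_fderiv one_ne_zero).continuousOn) η hη
  refine ⟨ρ, hρ, fun z₀ hz₀ z hz hzz₀ => ?_⟩
  refine (hSc.inter (convex_ball z₀ ρ)).norm_image_sub_le_of_norm_fderiv_le'
    (fun w _ => (hG.differentiable one_ne_zero) w) (fun w hw => ?_) ⟨hz₀, mem_ball_self hρ⟩
    ⟨hz, mem_ball_iff_norm.2 hzz₀⟩
  rw [← dist_eq_norm]
  exact (hUC w hw.1 z₀ hz₀ (mem_ball.1 hw.2)).le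

theorem norm_mk_sub_mk_le {E F : Type*} [NormedAddCommGroup E] [NormedAddCommGroup F] (s : ℝ)
    (y x : E) (q p : F) : ‖((s, y, q) : ℝ × E × F) - (s, x, p)‖ ≤ ‖y - x‖ + ‖q - p‖ := by
  simp only [Prod.mk_sub_mk, sub_self, Prod.norm_mk, norm_zero]
  exact max_le (by positivity) (max_le_add_of_nonneg (norm_nonneg _) (norm_nonneg _))

section Dependence

variable {E F : Type*} [NormedAddCommGroup E] [NormedSpace ℝ E] [NormedAddCommGroup F]
  [NormedSpace ℝ F] {G : ℝ × E × F → E} {a b t₁ : ℝ}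

theorem norm_sub_le_of_isIntegralCurveOn_param (hG : Differentiable ℝ G) {S : Set (ℝ × E × F)}
    (hS : Convex ℝ S) {M : ℝ} (hM : ∀ z ∈ S, ‖fderiv ℝ G z‖ ≤ M) {p q : F} {f g : ℝ → E}
    (hf : IsIntegralCurveOn f (fun s x => G (s, x, q)) (Icc a b))
    (hg : IsIntegralCurveOn g (fun s x => G (s, x, p)) (Icc a b))
    (hfS : ∀ s ∈ Icc a b, (s, f s, q) ∈ S) (hgS : ∀ s ∈ Icc a b, (s, g s, p) ∈ S)
    (ht₁ : t₁ ∈ Icc a b) (hfg : f t₁ = g t₁) :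
    ∀ s ∈ Icc a b, ‖f s - g s‖ ≤ M * (b - a) * Real.exp (M * (b - a)) * ‖q - p‖ := by
  have hM₀ : 0 ≤ M := (norm_nonneg _).trans (hM _ (hgS t₁ ht₁))
  intro s hs
  refine (norm_le_gronwallBound_of_hasDerivWithinAt_Icc (f := fun s => f s - g s)
    (ε := M * ‖q - p‖) le_rfl hM₀ (by positivity) ht₁ (fun s hs => (hf s hs).sub (hg s hs))
    (by simp [hfg]) (fun s hs => ?_) s hs).trans
    ((gronwallBound_zero_le hM₀ (by positivity)).trans_eq (by ring))
  calc ‖G (s, f s, q) - G (s, g s, p)‖ ≤ M * ‖((s, f s, q) : ℝ × E × F) - (s, g s, p)‖ :=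
        hS.norm_image_sub_le_of_norm_fderiv_le (fun z _ => hG z) hM (hgS s hs) (hfS s hs)
    _ ≤ M * ‖f s - g s‖ + M * ‖q - p‖ := by
        rw [← mul_add]; exact mul_le_mul_of_nonneg_left (norm_mk_sub_mk_le _ _ _ _ _) hM₀

theorem norm_sub_sub_le_of_isIntegralCurveOn_variationalField (hG : Differentiable ℝ G)
    {S : Set (ℝ × E × F)} {M η ρ κ : ℝ} (hM : ∀ z ∈ S, ‖fderiv ℝ G z‖ ≤ M) (hη : 0 ≤ η)
    (hlin : ∀ z₀ ∈ S, ∀ z ∈ S, ‖z - z₀‖ < ρ →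
      ‖G z - G z₀ - fderiv ℝ G z₀ (z - z₀)‖ ≤ η * ‖z - z₀‖)
    {p q : F} {f γ : ℝ → E} {D : ℝ → F →L[ℝ] E}
    (hf : IsIntegralCurveOn f (fun s x => G (s, x, q)) (Icc a b))
    (hγ : IsIntegralCurveOn γ (fun s x => G (s, x, p)) (Icc a b))
    (hD : IsIntegralCurveOn D (variationalField G γ p) (Icc a b))
    (hfS : ∀ s ∈ Icc a b, (s, f s, q) ∈ S) (hγS : ∀ s ∈ Icc a b, (s, γ s, p) ∈ S)
    (hclose : ∀ s ∈ Icc a b, ‖((s, f s, q) : ℝ × E × F) - (s, γ s, p)‖ ≤ κ) (hκ : κ < ρ)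
    (ht₁ : t₁ ∈ Icc a b) (hfγ : f t₁ = γ t₁) (hD₁ : D t₁ = 0) :
    ∀ t ∈ Icc a b, ‖f t - γ t - D t (q - p)‖ ≤ η * κ * (b - a) * Real.exp (M * (b - a)) := by
  have hM₀ : 0 ≤ M := (norm_nonneg _).trans (hM _ (hγS t₁ ht₁))
  have hκ₀ : 0 ≤ κ := (norm_nonneg _).trans (hclose t₁ ht₁)
  have hw : ∀ s ∈ Icc a b, HasDerivWithinAt (fun s => f s - γ s - D s (q - p))
      (G (s, f s, q) - G (s, γ s, p) - variationalField G γ p s (D s) (q - p)) (Icc a b) s :=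
    fun s hs => by
      have h := ((hf s hs).sub (hγ s hs)).sub
        ((hD s hs).clm_apply (hasDerivWithinAt_const s _ (q - p)))
      rwa [map_zero, add_zero] at h
  intro t ht
  refine (norm_le_gronwallBound_of_hasDerivWithinAt_Icc le_rfl hM₀ (by positivity) ht₁ hw
    (by simp [hfγ, hD₁]) (fun s hs => ?_) t ht).trans (gronwallBound_zero_le hM₀ (by positivity))
  refine (norm_sub_sub_variationalField_le (hG _) (D s) (f s) q).trans ?_
  rw [add_comm]
  gcongr
  · exact hM _ (hγS s hs)
  · exact (hlin _ (hγS s hs) _ (hfS s hs) ((hclose s hs).trans_lt hκ)).trans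
      (by gcongr; exact hclose s hs)

theorem hasFDerivAt_of_isIntegralCurveOn_variationalField [ProperSpace E] [ProperSpace F]
    (hG : ContDiff ℝ 1 G) {K : Set E} (hK : Bornology.IsBounded K) {P : Set F} {p : F}
    (hP : P ∈ 𝓝 p) (ht₁ : t₁ ∈ Icc a b) {u : F → ℝ → E}
    (hu : ∀ q ∈ P, IsIntegralCurveOn (u q) (fun s x => G (s, x, q)) (Icc a b))
    (huK : ∀ q ∈ P, ∀ s ∈ Icc a b, u q s ∈ K) (hu₁ : ∀ q ∈ P, u q t₁ = u p t₁)
    {D : ℝ → F →L[ℝ] E} (hD₁ : D t₁ = 0)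
    (hD : IsIntegralCurveOn D (variationalField G (u p) p) (Icc a b)) {t : ℝ} (ht : t ∈ Icc a b) :
    HasFDerivAt (fun q => u q t) (D t) p := by
  have hG' : Differentiable ℝ G := hG.differentiable one_ne_zero
  obtain ⟨r, hr, hrP⟩ := nhds_basis_closedBall.mem_iff.1 hP
  obtain ⟨R, hR⟩ := hK.subset_closedBall 0
  set S : Set (ℝ × E × F) := Icc a b ×ˢ closedBall 0 R ×ˢ closedBall p r
  have hS : IsCompact S :=
    isCompact_Icc.prod ((isCompact_closedBall _ _).prod (isCompact_closedBall _ _))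
  have hSc : Convex ℝ S :=
    (convex_Icc _ _).prod ((convex_closedBall _ _).prod (convex_closedBall _ _))
  have huS : ∀ q ∈ closedBall p r, ∀ s ∈ Icc a b, (s, u q s, q) ∈ S :=
    fun q hq s hs => ⟨hs, hR (huK q (hrP hq) s hs), hq⟩
  have hpr : p ∈ closedBall p r := mem_closedBall_self hr.le
  obtain ⟨M, hM⟩ := hS.exists_bound_of_continuousOn (hG.continuous_fderiv one_ne_zero).continuousOn
  have hM₀ : 0 ≤ M := (norm_nonneg _).trans (hM _ (huS p hpr t₁ ht₁))
  set T := b - a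
  set Cu := M * T * Real.exp (M * T)
  have hCu : 0 ≤ Cu := by have := ht₁.1.trans ht₁.2; positivity
  have hlip : ∀ q ∈ closedBall p r, ∀ s ∈ Icc a b, ‖u q s - u p s‖ ≤ Cu * ‖q - p‖ :=
    fun q hq => norm_sub_le_of_isIntegralCurveOn_param hG' hSc hM (hu q (hrP hq)) (hu p (hrP hpr))
      (huS q hq) (huS p hpr) ht₁ (hu₁ q (hrP hq))
  rw [hasFDerivAt_iff_isLittleO, Asymptotics.isLittleO_iff]
  intro c hc
  obtain ⟨η, hη, hηc⟩ := exists_pos_mul_lt hc ((Cu + 1) * T * Real.exp (M * T))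
  obtain ⟨ρ, hρ, hlin⟩ := hS.exists_forall_norm_sub_sub_fderiv_le hG hSc hη
  filter_upwards [closedBall_mem_nhds p hr,
    ball_mem_nhds p (div_pos hρ (by positivity : 0 < Cu + 1))] with q hqr hqρ
  rw [mem_ball_iff_norm, lt_div_iff₀' (by positivity)] at hqρ
  have hζ : ∀ s ∈ Icc a b, ‖((s, u q s, q) : ℝ × E × F) - (s, u p s, p)‖ ≤ (Cu + 1) * ‖q - p‖ :=
    fun s hs => (norm_mk_sub_mk_le _ _ _ _ _).trans (by linarith [hlip q hqr s hs])
  calc ‖u q t - u p t - D t (q - p)‖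
      ≤ η * ((Cu + 1) * ‖q - p‖) * T * Real.exp (M * T) :=
        norm_sub_sub_le_of_isIntegralCurveOn_variationalField hG' hM hη.le hlin (hu q (hrP hqr))
          (hu p (hrP hpr)) hD (huS q hqr) (huS p hpr) hζ hqρ ht₁ (hu₁ q (hrP hqr)) hD₁ t ht
    _ = (Cu + 1) * T * Real.exp (M * T) * η * ‖q - p‖ := by ring
    _ ≤ c * ‖q - p‖ := by gcongr

end Dependence

theorem parameter_derivative_moderateness_general (n l : ℕ)
    (t₀ h : ℝ) (t₁ : ℝ) (ht₁ : t₁ ∈ Icc (t₀ - h) (t₀ + h))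
    (K : Set (EuclideanSpace ℝ (Fin n))) (hK : IsCompact K)
    (P : Set (EuclideanSpace ℝ (Fin l))) (hP : IsOpen P)
    (C₁ C₂ : ℝ) (N₁ : ℕ)
    (F : ℝ → ℝ × EuclideanSpace ℝ (Fin n) × EuclideanSpace ℝ (Fin l) →
      EuclideanSpace ℝ (Fin n))
    (hF : ∀ ε ∈ Ioc (0:ℝ) 1, ContDiff ℝ 1 (F ε))
    (hFp : ∀ ε ∈ Ioc (0:ℝ) 1, ∀ t ∈ Icc (t₀ - h) (t₀ + h), ∀ x ∈ K, ∀ p ∈ P,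
      ‖fderiv ℝ (fun q => F ε (t, x, q)) p‖ ≤ C₁ * ε ^ (-(N₁ : ℝ)))
    (hFx : ∀ ε ∈ Ioc (0:ℝ) 1, ∀ t ∈ Icc (t₀ - h) (t₀ + h), ∀ x ∈ K, ∀ p ∈ P,
      ‖fderiv ℝ (fun y => F ε (t, y, p)) x‖ ≤ C₂ * |Real.log ε|)
    (x₁ : EuclideanSpace ℝ (Fin n))
    (u : ℝ → EuclideanSpace ℝ (Fin l) → ℝ → EuclideanSpace ℝ (Fin n))
    (hsol : ∀ ε ∈ Ioc (0:ℝ) 1, ∀ p ∈ P, ∀ t ∈ Icc (t₀ - h) (t₀ + h),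
      u ε p t ∈ K ∧
      HasDerivWithinAt (u ε p) (F ε (t, u ε p t, p)) (Icc (t₀ - h) (t₀ + h)) t)
    (hinit : ∀ ε ∈ Ioc (0:ℝ) 1, ∀ p ∈ P, u ε p t₁ = x₁) :
    ∀ ε ∈ Ioc (0:ℝ) 1, ∀ p ∈ P, ∀ t ∈ Icc (t₀ - h) (t₀ + h),
      ∃ D : EuclideanSpace ℝ (Fin l) →L[ℝ] EuclideanSpace ℝ (Fin n),
        HasFDerivAt (fun q => u ε q t) D p ∧
        ‖D‖ ≤ (2 * h * C₁) * ε ^ (-(((N₁ : ℝ) + 2 * h * C₂))) := by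
  intro ε hε p hp t ht
  have huK q hq s hs := (hsol ε hε q hq s hs).1
  have hu q hq : IsIntegralCurveOn (u ε q) (fun s x => F ε (s, x, q)) _ :=
    fun s hs => (hsol ε hε q hq s hs).2
  obtain ⟨D, hD₁, hD⟩ := exists_isIntegralCurveOn_variationalField (p := p) (hF ε hε)
    (hu p hp).continuousOn ht₁
  refine ⟨D t, hasFDerivAt_of_isIntegralCurveOn_variationalField (hF ε hε) hK.isBounded
    (hP.mem_nhds hp) ht₁ hu huK (fun q hq => (hinit ε hε q hq).trans (hinit ε hε p hp).symm)
    hD₁ hD ht, ?_⟩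
  have hT : t₀ + h - (t₀ - h) = 2 * h := by ring
  calc ‖D t‖ ≤ C₁ * ε ^ (-(N₁ : ℝ)) * (2 * h) * Real.exp (C₂ * |Real.log ε| * (2 * h)) := by
        simpa only [hT] using norm_le_of_isIntegralCurveOn_variationalField ht₁ hD₁ hD
          (fun s hs => hFx ε hε s hs _ (huK p hp s hs) p hp)
          (fun s hs => hFp ε hε s hs _ (huK p hp s hs) p hp) t ht
    _ = (2 * h * C₁) * ε ^ (-(((N₁ : ℝ) + 2 * h * C₂))) := by
        rw [show C₂ * |Real.log ε| * (2 * h) = 2 * h * C₂ * |Real.log ε| by ring,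
          Real.exp_mul_abs_log hε, neg_add, Real.rpow_add hε.1]
        ring

theorem parameter_derivative_moderateness (n l : ℕ)
    (t₀ h : ℝ) (hh : 0 < h) (t₁ : ℝ) (ht₁ : t₁ ∈ Icc (t₀ - h) (t₀ + h))
    (K : Set (EuclideanSpace ℝ (Fin n))) (hK : IsCompact K)
    (P : Set (EuclideanSpace ℝ (Fin l))) (hP : IsOpen P)
    (C₁ C₂ : ℝ) (N₁ : ℕ) (hC₁ : 0 < C₁) (hC₂ : 0 < C₂)
    (F : ℝ → ℝ × EuclideanSpace ℝ (Fin n) × EuclideanSpace ℝ (Fin l) →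
      EuclideanSpace ℝ (Fin n))
    (hF : ∀ ε ∈ Ioc (0:ℝ) 1, ContDiff ℝ 1 (F ε))
    (hFp : ∀ ε ∈ Ioc (0:ℝ) 1, ∀ t ∈ Icc (t₀ - h) (t₀ + h), ∀ x ∈ K, ∀ p ∈ P,
      ‖fderiv ℝ (fun q => F ε (t, x, q)) p‖ ≤ C₁ * ε ^ (-(N₁ : ℝ)))
    (hFx : ∀ ε ∈ Ioc (0:ℝ) 1, ∀ t ∈ Icc (t₀ - h) (t₀ + h), ∀ x ∈ K, ∀ p ∈ P,
      ‖fderiv ℝ (fun y => F ε (t, y, p)) x‖ ≤ C₂ * |Real.log ε|)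
    (x₁ : EuclideanSpace ℝ (Fin n))
    (u : ℝ → EuclideanSpace ℝ (Fin l) → ℝ → EuclideanSpace ℝ (Fin n))
    (hsol : ∀ ε ∈ Ioc (0:ℝ) 1, ∀ p ∈ P, ∀ t ∈ Icc (t₀ - h) (t₀ + h),
      u ε p t ∈ K ∧
      HasDerivWithinAt (u ε p) (F ε (t, u ε p t, p)) (Icc (t₀ - h) (t₀ + h)) t)
    (hinit : ∀ ε ∈ Ioc (0:ℝ) 1, ∀ p ∈ P, u ε p t₁ = x₁) :
    ∀ ε ∈ Ioc (0:ℝ) 1, ∀ p ∈ P, ∀ t ∈ Icc (t₀ - h) (t₀ + h),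
      ∃ D : EuclideanSpace ℝ (Fin l) →L[ℝ] EuclideanSpace ℝ (Fin n),
        HasFDerivAt (fun q => u ε q t) D p ∧
        ‖D‖ ≤ (2 * h * C₁) * ε ^ (-(((N₁ : ℝ) + 2 * h * C₂))) :=
  parameter_derivative_moderateness_general n l t₀ h t₁ ht₁ K hK P hP C₁ C₂ N₁ F hF hFp hFx x₁ u
    hsol hinit
end

section
/- Let U ⊆ ℝⁿ, V ⊆ ℝᵐ be open, F : U × V → ℝ^{m×n} be C¹ (viewed as L(ℝⁿ, ℝᵐ)-valued), and suppose u : U₀ → V is a C² function on an open set U₀ ⊆ U solving the total differential equation Du(x) = F(x, u(x)) for all x ∈ U₀. Then for all x ∈ U₀ and all v₁, v₂ ∈ ℝⁿ, the expression DF(x,u(x))(v₁, F(x,u(x))(v₁))(v₂) is symmetric in (v₁, v₂); i.e., DF(x,u(x))(v₁, F(x,u(x))v₁)(v₂) = DF(x,u(x))(v₂, F(x,u(x))v₂)(v₁). -/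
open Set Filter Topology

/-! Differentiating `Du(y) = F(y, u y)` once more gives `D²u(x) = DF(x, u x) ∘ (id, Du(x))`,
and Schwarz's theorem makes this bilinear map symmetric. -/

section

variable {𝕜 : Type*} [NontriviallyNormedField 𝕜]
  {E G H : Type*} [NormedAddCommGroup E] [NormedSpace 𝕜 E] [NormedAddCommGroup G] [NormedSpace 𝕜 G]
  [NormedAddCommGroup H] [NormedSpace 𝕜 H]

theorem HasFDerivAt.comp_prodMk_id {F : E × G → H} {F' : E × G →L[𝕜] H} {u : E → G}
    {u' : E →L[𝕜] G} {x : E} (hF : HasFDerivAt F F' (x, u x)) (hu : HasFDerivAt u u' x) :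
    HasFDerivAt (fun y => F (y, u y)) (F'.comp ((ContinuousLinearMap.id 𝕜 E).prod u')) x :=
  hF.comp x ((hasFDerivAt_id x).prodMk hu)

theorem fderiv_symmetric_of_eventually_hasFDerivAt_eq [IsRCLikeNormedField 𝕜]
    {F : E × G → E →L[𝕜] G} {u : E → G} {x : E}
    (hF : DifferentiableAt 𝕜 F (x, u x)) (hsol : ∀ᶠ y in 𝓝 x, HasFDerivAt u (F (y, u y)) y)
    (v w : E) :
    fderiv 𝕜 F (x, u x) (v, F (x, u x) v) w = fderiv 𝕜 F (x, u x) (w, F (x, u x) w) v :=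
  second_derivative_symmetric_of_eventually hsol
    (hF.hasFDerivAt.comp_prodMk_id hsol.self_of_nhds) v w

end

theorem frobenius_integrability_necessary_general (n m : ℕ)
    (U : Set (EuclideanSpace ℝ (Fin n))) (hU : IsOpen U)
    (V : Set (EuclideanSpace ℝ (Fin m))) (hV : IsOpen V)
    (F : EuclideanSpace ℝ (Fin n) × EuclideanSpace ℝ (Fin m) →
      (EuclideanSpace ℝ (Fin n) →L[ℝ] EuclideanSpace ℝ (Fin m)))
    (hF : ContDiffOn ℝ 1 F (U ×ˢ V))
    (U₀ : Set (EuclideanSpace ℝ (Fin n))) (hU₀ : IsOpen U₀) (hU₀U : U₀ ⊆ U)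
    (u : EuclideanSpace ℝ (Fin n) → EuclideanSpace ℝ (Fin m))
    (huV : MapsTo u U₀ V)
    (hsol : ∀ x ∈ U₀, HasFDerivAt u (F (x, u x)) x) :
    ∀ x ∈ U₀, ∀ v₁ v₂ : EuclideanSpace ℝ (Fin n),
      fderiv ℝ F (x, u x) (v₁, F (x, u x) v₁) v₂ =
      fderiv ℝ F (x, u x) (v₂, F (x, u x) v₂) v₁ := by
  intro x hx v₁ v₂
  have hmem : (x, u x) ∈ U ×ˢ V := ⟨hU₀U hx, huV hx⟩
  have hFdiff : DifferentiableAt ℝ F (x, u x) :=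
    (hF.contDiffAt ((hU.prod hV).mem_nhds hmem)).differentiableAt one_ne_zero
  have hsol_near : ∀ᶠ y in 𝓝 x, HasFDerivAt u (F (y, u y)) y :=
    eventually_of_mem (hU₀.mem_nhds hx) hsol
  exact fderiv_symmetric_of_eventually_hasFDerivAt_eq hFdiff hsol_near v₁ v₂

theorem frobenius_integrability_necessary (n m : ℕ)
    (U : Set (EuclideanSpace ℝ (Fin n))) (hU : IsOpen U)
    (V : Set (EuclideanSpace ℝ (Fin m))) (hV : IsOpen V)
    (F : EuclideanSpace ℝ (Fin n) × EuclideanSpace ℝ (Fin m) →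
      (EuclideanSpace ℝ (Fin n) →L[ℝ] EuclideanSpace ℝ (Fin m)))
    (hF : ContDiffOn ℝ 1 F (U ×ˢ V))
    (U₀ : Set (EuclideanSpace ℝ (Fin n))) (hU₀ : IsOpen U₀) (hU₀U : U₀ ⊆ U)
    (u : EuclideanSpace ℝ (Fin n) → EuclideanSpace ℝ (Fin m))
    (hu : ContDiffOn ℝ 2 u U₀) (huV : MapsTo u U₀ V)
    (hsol : ∀ x ∈ U₀, HasFDerivAt u (F (x, u x)) x) :
    ∀ x ∈ U₀, ∀ v₁ v₂ : EuclideanSpace ℝ (Fin n),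
      fderiv ℝ F (x, u x) (v₁, F (x, u x) v₁) v₂ =
      fderiv ℝ F (x, u x) (v₂, F (x, u x) v₂) v₁ :=
  frobenius_integrability_necessary_general n m U hU V hV F hF U₀ hU₀ hU₀U u huV hsol
end

section
/- Let U ⊆ ℝⁿ, V ⊆ ℝᵐ open, F : U × V → L(ℝⁿ,ℝᵐ) be C¹ satisfying the Frobenius integrability condition: DF(x,y)(v₁, F(x,y)v₁)(v₂) is symmetric in v₁,v₂ for all (x,y). Fix x₀ ∈ U, and for v ∈ B₁(0) ⊆ ℝⁿ let f(v,·) solve the ODE ∂_t f(v,t) = F(x₀ + t v, f(v,t))(v), f(v,0) = y₀, on (−h,h), with values staying in a fixed compact K ⊆ V on which F is Lipschitz in the second variable. Then for all t ∈ (−h,h), v ∈ B₁(0), w ∈ ℝⁿ: ∂_v f(v,t)(w) = F(x₀ + t v, f(v,t))(t w). -/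
/-!
Fix a direction `v` and a time `t ≥ 0`, and compare the solutions along the rays in the
directions `v + w` and `v`. Grönwall's inequality, fed with the Lipschitz bound of `F` in `y` on
`K`, first shows that `f (v + w) s - f v s = O(‖w‖)` uniformly for `s ∈ [0, t]`. The defect
`g_w s = f (v + w) s - f v s - s • F (x₀ + s • v, f v s) w` vanishes at `s = 0`, and expanding
`F` to first order along the curve `s ↦ (x₀ + s • v, f v s)` shows that the integrability
condition cancels every term of `g_w'` that is not `O(‖g_w‖)` or `o(‖w‖)`. Grönwall's inequality
then gives `g_w t = o(‖w‖)`, which is the claimed derivative. Negative times follow by applying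
this to `(v, t) ↦ f (-v) (-t)`.
-/

open Set Metric Filter Topology Asymptotics

section Gronwall

variable {G : Type*} [NormedAddCommGroup G] [NormedSpace ℝ G]

theorem gronwallBound_δ0 (K ε x : ℝ) : gronwallBound 0 K ε x = ε * gronwallBound 0 K 1 x := by
  by_cases hK : K = 0
  · simp [gronwallBound_K0, hK]
  · simp only [gronwallBound_of_K_ne_0 hK]
    ring

theorem gronwallBound_δ0_nonneg {K x : ℝ} (hK : 0 ≤ K) (hx : 0 ≤ x) :
    0 ≤ gronwallBound 0 K 1 x := by
  simpa [gronwallBound_x0] using gronwallBound_mono le_rfl zero_le_one hK hx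

theorem norm_le_mul_gronwallBound_of_norm_deriv_le {g g' : ℝ → G} {K c b : ℝ} (hK : 0 ≤ K)
    (hc : 0 ≤ c) (hg : ∀ s ∈ Icc 0 b, HasDerivAt g (g' s) s) (h0 : g 0 = 0)
    (hbound : ∀ s ∈ Ico 0 b, ‖g' s‖ ≤ K * ‖g s‖ + c) :
    ∀ s ∈ Icc 0 b, ‖g s‖ ≤ c * gronwallBound 0 K 1 b := by
  intro s hs
  calc ‖g s‖ ≤ gronwallBound 0 K c (s - 0) :=
        norm_le_gronwallBound_of_norm_deriv_right_le
          (fun s hs => (hg s hs).continuousAt.continuousWithinAt)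
          (fun s hs => (hg s (Ico_subset_Icc_self hs)).hasDerivWithinAt) (by simp [h0]) hbound s hs
    _ ≤ c * gronwallBound 0 K 1 b := by
        rw [sub_zero, gronwallBound_δ0]
        exact mul_le_mul_of_nonneg_left (gronwallBound_mono le_rfl zero_le_one hK hs.2) hc

theorem isLittleO_of_norm_deriv_le {X G' : Type*} [NormedAddCommGroup G'] {l : Filter X}
    {g g' : X → ℝ → G} {φ : X → G'} {K b : ℝ} (hK : 0 ≤ K) (hb : 0 ≤ b)
    (hg : ∀ᶠ x in l, ∀ s ∈ Icc 0 b, HasDerivAt (g x) (g' x s) s) (h0 : ∀ᶠ x in l, g x 0 = 0)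
    (hbound : ∀ ε > 0, ∀ᶠ x in l, ∀ s ∈ Ico 0 b, ‖g' x s‖ ≤ K * ‖g x s‖ + ε * ‖φ x‖) :
    (fun x => g x b) =o[l] φ := by
  set B := gronwallBound 0 K 1 b
  have hB : 0 ≤ B := gronwallBound_δ0_nonneg hK hb
  refine isLittleO_iff.2 fun c hc => ?_
  filter_upwards [hg, h0, hbound (c / (B + 1)) (by positivity)] with x hgx h0x hx
  calc ‖g x b‖ ≤ c / (B + 1) * ‖φ x‖ * B :=
        norm_le_mul_gronwallBound_of_norm_deriv_le hK (by positivity) hgx h0x hx b ⟨hb, le_rfl⟩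
    _ = c * ‖φ x‖ * (B / (B + 1)) := by ring
    _ ≤ c * ‖φ x‖ :=
        mul_le_of_le_one_right (by positivity) (div_le_one_of_le₀ (by linarith) (by positivity))

end Gronwall

theorem Icc_subset_Ioo_neg_of_mem_Ico {t h : ℝ} (ht : t ∈ Ico 0 h) : Icc 0 t ⊆ Ioo (-h) h :=
  fun _ hs => ⟨by linarith [hs.1, ht.1, ht.2], hs.2.trans_lt ht.2⟩

theorem eventually_add_mem_of_mem_nhds {X : Type*} [AddGroup X] [TopologicalSpace X]
    [IsTopologicalAddGroup X] {v : X} {s : Set X} (hs : s ∈ 𝓝 v) : ∀ᶠ w in 𝓝 0, v + w ∈ s :=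
  ((continuous_const_add v).tendsto' 0 v (add_zero v)).eventually_mem hs

theorem norm_sub_le_of_norm_sub_sub_le {X Y : Type*} [NormedAddCommGroup X] [NormedSpace ℝ X]
    [NormedAddCommGroup Y] [NormedSpace ℝ Y] {F : X → Y} {D : X →L[ℝ] Y} {p q : X} {L ε : ℝ}
    (hD : ‖D‖ ≤ L) (hF : ‖F q - F p - D (q - p)‖ ≤ ε * ‖q - p‖) :
    ‖F q - F p‖ ≤ (L + ε) * ‖q - p‖ :=
  calc ‖F q - F p‖ ≤ ‖F q - F p - D (q - p)‖ + ‖D (q - p)‖ := norm_le_norm_sub_add _ _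
    _ ≤ ε * ‖q - p‖ + L * ‖q - p‖ := add_le_add hF (D.le_of_opNorm_le hD _)
    _ = (L + ε) * ‖q - p‖ := by ring

theorem IsCompact.exists_forall_norm_sub_sub_fderiv_le_s13 {X Y : Type*} [NormedAddCommGroup X]
    [NormedSpace ℝ X] [NormedAddCommGroup Y] [NormedSpace ℝ Y] {F : X → Y} {W P : Set X}
    (hW : IsOpen W) (hF : ContDiffOn ℝ 1 F W) (hP : IsCompact P) (hPW : P ⊆ W) {ε : ℝ}
    (hε : 0 < ε) :
    ∃ δ > 0, ∀ p ∈ P, ∀ q, ‖q - p‖ ≤ δ → ‖F q - F p - fderiv ℝ F p (q - p)‖ ≤ ε * ‖q - p‖ := by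
  obtain ⟨δ₁, hδ₁, hthick⟩ := hP.exists_thickening_subset_open hW hPW
  have hunif := hP.uniformContinuousAt_of_continuousAt (fderiv ℝ F)
    (fun p hp => (hF.continuousOn_fderiv_of_isOpen hW le_rfl).continuousAt (hW.mem_nhds (hPW hp)))
    (dist_mem_uniformity hε)
  obtain ⟨δ₂, hδ₂, hδ₂unif⟩ := mem_uniformity_dist.1 hunif
  refine ⟨min δ₁ δ₂ / 2, by positivity, fun p hp q hq => ?_⟩
  have hclose : ∀ z ∈ closedBall p ‖q - p‖, dist z p < δ₁ ∧ dist p z < δ₂ := fun z hz => by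
    have := mem_closedBall.1 hz
    rw [dist_comm p z]
    constructor <;> linarith [min_le_left δ₁ δ₂, min_le_right δ₁ δ₂]
  refine Convex.norm_image_sub_le_of_norm_hasFDerivWithin_le' (f' := fderiv ℝ F)
    (fun z hz => ?_) (fun z hz => ?_) (convex_closedBall p ‖q - p‖)
    (mem_closedBall_self (norm_nonneg _)) (mem_closedBall.2 (dist_eq_norm q p).le)
  · have hzW : z ∈ W := hthick (mem_thickening_iff.2 ⟨p, hp, (hclose z hz).1⟩)
    exact ((hF.differentiableOn one_ne_zero z hzW).differentiableAt
      (hW.mem_nhds hzW)).hasFDerivAt.hasFDerivWithinAt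
  · rw [← dist_eq_norm, dist_comm]
    exact (hδ₂unif (hclose z hz).2 hp).le

section LinearMaps

variable {E E' : Type*} [NormedAddCommGroup E] [NormedSpace ℝ E] [NormedAddCommGroup E']
  [NormedSpace ℝ E']

theorem norm_apply_add_sub_apply_le {A B C : E →L[ℝ] E'} {v w : E} (hvw : ‖v + w‖ ≤ 1) :
    ‖C (v + w) - A v‖ ≤ ‖C - B‖ + ‖B - A‖ + ‖A‖ * ‖w‖ := by
  have hsplit : C (v + w) - A v = (C - B) (v + w) + (B - A) (v + w) + A w := by
    simp only [sub_apply, map_add]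
    abel
  rw [hsplit]
  refine norm_add₃_le.trans (add_le_add_three ?_ ?_ (A.le_opNorm w))
  · simpa using (C - B).le_opNorm_of_le hvw
  · simpa using (B - A).le_opNorm_of_le hvw

/-- This is where the integrability condition enters: the first-order change of `B` from `A` in
the direction `(s • w, y)`, evaluated at `v + w`, leaves only a term linear in the defect
`y - s • A w` and a term quadratic in `w`. -/
theorem frobenius_defect_eq {A B : E →L[ℝ] E'} {D : E × E' →L[ℝ] E →L[ℝ] E'} {v w : E}
    (hD : D (w, A w) v = D (v, A v) w) (s : ℝ) (y : E') :
    B (v + w) - A v - (A w + s • D (v, A v) w) =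
      D (0, y - s • A w) (v + w) + s • D (w, A w) w + (B - A - D (s • w, y)) (v + w) := by
  have hsplit : ((s • w, y) : E × E') = s • (w, A w) + (0, y - s • A w) := by ext <;> simp
  rw [hsplit, ← hD]
  simp only [map_add, map_smul, add_apply, sub_apply, smul_apply]
  module

theorem norm_frobenius_defect_le {A B : E →L[ℝ] E'} {D : E × E' →L[ℝ] E →L[ℝ] E'} {v w : E}
    (hD : D (w, A w) v = D (v, A v) w) (hvw : ‖v + w‖ ≤ 1) (s : ℝ) (y : E') :
    ‖B (v + w) - A v - (A w + s • D (v, A v) w)‖ ≤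
      ‖D‖ * ‖y - s • A w‖ + |s| * (‖D‖ * ‖(w, A w)‖ * ‖w‖) + ‖B - A - D (s • w, y)‖ := by
  rw [frobenius_defect_eq hD s y]
  refine norm_add₃_le.trans (add_le_add_three ?_ ?_ ?_)
  · calc ‖D (0, y - s • A w) (v + w)‖ ≤ ‖D‖ * ‖((0 : E), y - s • A w)‖ * ‖v + w‖ :=
          D.le_opNorm₂ _ _
      _ ≤ ‖D‖ * ‖y - s • A w‖ := by
          simpa using mul_le_of_le_one_right (by positivity) hvw
  · rw [norm_smul, Real.norm_eq_abs]
    exact mul_le_mul_of_nonneg_left (D.le_opNorm₂ _ _) (abs_nonneg s)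
  · simpa using (B - A - D (s • w, y)).le_opNorm_of_le hvw

end LinearMaps

def radialCurve {E E' : Type*} [Add E] [SMul ℝ E] (x₀ : E) (f : E → ℝ → E') (v : E) (s : ℝ) :
    E × E' :=
  (x₀ + s • v, f v s)

theorem radialCurve_add_sub {E E' : Type*} [AddCommGroup E] [Module ℝ E] [AddCommGroup E']
    (x₀ : E) (f : E → ℝ → E') (v w : E) (s : ℝ) :
    radialCurve x₀ f (v + w) s - radialCurve x₀ f v s = (s • w, f (v + w) s - f v s) := by
  ext <;> simp [radialCurve, smul_add]

section RadialFlow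

variable {E E' : Type*} [NormedAddCommGroup E] [NormedSpace ℝ E] [NormedAddCommGroup E']
  [NormedSpace ℝ E'] {U : Set E} {F : E × E' → E →L[ℝ] E'} {x₀ : E} {y₀ : E'} {h : ℝ}
  {K : Set E'} {f : E → ℝ → E'}

structure IsRadialFlow (U : Set E) (F : E × E' → E →L[ℝ] E') (x₀ : E) (y₀ : E') (h : ℝ)
    (K : Set E') (f : E → ℝ → E') : Prop where
  mem_dom : ∀ v ∈ ball (0 : E) 1, ∀ t ∈ Ioo (-h) h, x₀ + t • v ∈ U
  mem_K : ∀ v ∈ ball (0 : E) 1, ∀ t ∈ Ioo (-h) h, f v t ∈ K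
  map_zero : ∀ v ∈ ball (0 : E) 1, f v 0 = y₀
  hasDerivAt : ∀ v ∈ ball (0 : E) 1, ∀ t ∈ Ioo (-h) h,
    HasDerivAt (f v) (F (x₀ + t • v, f v t) v) t

def radialDefect (x₀ : E) (F : E × E' → E →L[ℝ] E') (f : E → ℝ → E') (v w : E) (s : ℝ) : E' :=
  f (v + w) s - f v s - s • F (radialCurve x₀ f v s) w

theorem norm_radialDefect_deriv_le {v w : E} (hvw : ‖v + w‖ ≤ 1) {s t : ℝ} (hs : s ∈ Icc 0 t)
    {L M r : ℝ} (hM : ‖F (radialCurve x₀ f v s)‖ ≤ M)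
    (hL : ‖fderiv ℝ F (radialCurve x₀ f v s)‖ ≤ L)
    (hsym : fderiv ℝ F (radialCurve x₀ f v s) (w, F (radialCurve x₀ f v s) w) v =
      fderiv ℝ F (radialCurve x₀ f v s) (v, F (radialCurve x₀ f v s) v) w)
    (hrem : ‖F (radialCurve x₀ f (v + w) s) - F (radialCurve x₀ f v s) -
      fderiv ℝ F (radialCurve x₀ f v s)
        (radialCurve x₀ f (v + w) s - radialCurve x₀ f v s)‖ ≤ r) :
    ‖F (radialCurve x₀ f (v + w) s) (v + w) - F (radialCurve x₀ f v s) v -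
        (F (radialCurve x₀ f v s) w +
          s • fderiv ℝ F (radialCurve x₀ f v s) (v, F (radialCurve x₀ f v s) v) w)‖ ≤
      L * ‖radialDefect x₀ F f v w s‖ + t * L * (1 + M) * ‖w‖ * ‖w‖ + r := by
  unfold radialDefect
  set p := radialCurve x₀ f v s
  have hwAw : ‖(w, F p w)‖ ≤ (1 + M) * ‖w‖ := by
    rw [Prod.norm_mk]
    refine max_le ?_ ((F p).le_opNorm w |>.trans ?_) <;>
      nlinarith [norm_nonneg w, norm_nonneg (F p)]
  rw [radialCurve_add_sub] at hrem
  calc _ ≤ ‖fderiv ℝ F p‖ * ‖f (v + w) s - f v s - s • F p w‖ +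
        |s| * (‖fderiv ℝ F p‖ * ‖(w, F p w)‖ * ‖w‖) +
        ‖F (radialCurve x₀ f (v + w) s) - F p - fderiv ℝ F p (s • w, f (v + w) s - f v s)‖ :=
        norm_frobenius_defect_le hsym hvw s _
    _ ≤ L * ‖f (v + w) s - f v s - s • F p w‖ + t * (L * ((1 + M) * ‖w‖) * ‖w‖) + r := by
        rw [abs_of_nonneg hs.1]
        gcongr
        exacts [hs.1.trans hs.2, hs.2, (norm_nonneg (fderiv ℝ F p)).trans hL]
    _ = _ := by ring

theorem eventually_norm_radialDefect_deriv_le {v : E} (hv : v ∈ ball (0 : E) 1) {t : ℝ}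
    (ht : 0 ≤ t) {C L M : ℝ} (hC0 : 0 ≤ C)
    (hC : ∀ᶠ w in 𝓝 (0 : E), ∀ s ∈ Icc 0 t, ‖f (v + w) s - f v s‖ ≤ C * ‖w‖)
    (hM : ∀ s ∈ Icc 0 t, ‖F (radialCurve x₀ f v s)‖ ≤ M)
    (hL : ∀ s ∈ Icc 0 t, ‖fderiv ℝ F (radialCurve x₀ f v s)‖ ≤ L)
    (htaylor : ∀ ε > 0, ∃ δ > 0, ∀ s ∈ Icc 0 t, ∀ p, ‖p - radialCurve x₀ f v s‖ ≤ δ →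
      ‖F p - F (radialCurve x₀ f v s) -
          fderiv ℝ F (radialCurve x₀ f v s) (p - radialCurve x₀ f v s)‖ ≤
        ε * ‖p - radialCurve x₀ f v s‖)
    (hsym : ∀ s ∈ Icc 0 t, ∀ v₁ v₂ : E,
      fderiv ℝ F (radialCurve x₀ f v s) (v₁, F (radialCurve x₀ f v s) v₁) v₂ =
        fderiv ℝ F (radialCurve x₀ f v s) (v₂, F (radialCurve x₀ f v s) v₂) v₁)
    {ε : ℝ} (hε : 0 < ε) :
    ∀ᶠ w in 𝓝 (0 : E), ∀ s ∈ Ico 0 t,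
      ‖F (radialCurve x₀ f (v + w) s) (v + w) - F (radialCurve x₀ f v s) v -
          (F (radialCurve x₀ f v s) w +
            s • fderiv ℝ F (radialCurve x₀ f v s) (v, F (radialCurve x₀ f v s) v) w)‖ ≤
        L * ‖radialDefect x₀ F f v w s‖ + ε * ‖w‖ := by
  have hL0 : 0 ≤ L := (norm_nonneg (fderiv ℝ F _)).trans (hL 0 ⟨le_rfl, ht⟩)
  have hM0 : 0 ≤ M := (norm_nonneg _).trans (hM 0 ⟨le_rfl, ht⟩)
  have htC : 0 < t + C + 1 := by linarith
  have htLM : 0 < 2 * (t * L * (1 + M) + 1) := by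
    have := mul_nonneg (mul_nonneg ht hL0) (add_nonneg zero_le_one hM0)
    linarith
  set ε₁ := ε / (2 * (t + C + 1))
  have hε₁ : 0 < ε₁ := div_pos hε (mul_pos two_pos htC)
  have hε₁C : ε₁ * (t + C + 1) = ε / 2 := by
    simp only [ε₁]
    field_simp
  obtain ⟨δ, hδ, hδT⟩ := htaylor ε₁ hε₁
  filter_upwards [eventually_add_mem_of_mem_nhds (isOpen_ball.mem_nhds hv), hC,
    closedBall_mem_nhds (0 : E) (div_pos hδ htC),
    closedBall_mem_nhds (0 : E) (div_pos hε htLM)] with w hvw hCw hwδ hwε s hs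
  rw [mem_closedBall_zero_iff, le_div_iff₀ htC] at hwδ
  rw [mem_closedBall_zero_iff, le_div_iff₀ htLM] at hwε
  have hs' : s ∈ Icc 0 t := Ico_subset_Icc_self hs
  have hq : ‖radialCurve x₀ f (v + w) s - radialCurve x₀ f v s‖ ≤ (t + C) * ‖w‖ := by
    rw [radialCurve_add_sub, Prod.norm_mk, norm_smul, Real.norm_eq_abs, abs_of_nonneg hs.1]
    refine max_le ?_ ?_ <;>
      nlinarith [norm_nonneg w, mul_nonneg ht (norm_nonneg w), hs.2, hCw s hs']
  refine (norm_radialDefect_deriv_le (mem_ball_zero_iff.1 hvw).le hs' (hM s hs') (hL s hs')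
    (hsym s hs' w v) ((hδT s hs' _ (by nlinarith [norm_nonneg w])).trans
      (mul_le_mul_of_nonneg_left hq hε₁.le))).trans ?_
  have hquad : t * L * (1 + M) * ‖w‖ * ‖w‖ ≤ ε / 2 * ‖w‖ := by
    gcongr
    nlinarith [norm_nonneg w]
  have hlin : ε₁ * ((t + C) * ‖w‖) ≤ ε / 2 * ‖w‖ := by
    rw [← hε₁C, mul_assoc]
    gcongr ε₁ * (?_ * ‖w‖)
    linarith
  linarith

namespace IsRadialFlow

theorem comp_neg (hf : IsRadialFlow U F x₀ y₀ h K f) :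
    IsRadialFlow U F x₀ y₀ h K (fun v t => f (-v) (-t)) where
  mem_dom v hv t ht := by
    simpa using hf.mem_dom (-v) (by simpa using hv) (-t) ⟨by linarith [ht.2], by linarith [ht.1]⟩
  mem_K v hv t ht :=
    hf.mem_K (-v) (by simpa using hv) (-t) ⟨by linarith [ht.2], by linarith [ht.1]⟩
  map_zero v hv := by simpa using hf.map_zero (-v) (by simpa using hv)
  hasDerivAt v hv t ht := by
    have := (hf.hasDerivAt (-v) (by simpa using hv) (-t)
      ⟨by linarith [ht.2], by linarith [ht.1]⟩).scomp t (hasDerivAt_neg t)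
    simpa [Function.comp_def] using this

theorem continuousOn_radialCurve (hf : IsRadialFlow U F x₀ y₀ h K f) {v : E}
    (hv : v ∈ ball (0 : E) 1) : ContinuousOn (radialCurve x₀ f v) (Ioo (-h) h) :=
  (continuous_const.add (continuous_id.smul continuous_const)).continuousOn.prodMk
    fun s hs => (hf.hasDerivAt v hv s hs).continuousAt.continuousWithinAt

theorem hasDerivAt_apply_radialCurve (hf : IsRadialFlow U F x₀ y₀ h K f) {v : E}
    (hv : v ∈ ball (0 : E) 1) {s : ℝ} (hs : s ∈ Ioo (-h) h) {D : E × E' →L[ℝ] E →L[ℝ] E'}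
    (hD : HasFDerivAt F D (radialCurve x₀ f v s)) (w : E) :
    HasDerivAt (fun s => F (radialCurve x₀ f v s) w)
      (D (v, F (radialCurve x₀ f v s) v) w) s := by
  have hγ : HasDerivAt (radialCurve x₀ f v) (v, F (radialCurve x₀ f v s) v) s := by
    refine HasDerivAt.prodMk ?_ (hf.hasDerivAt v hv s hs)
    simpa using ((hasDerivAt_id s).smul_const v).const_add x₀
  simpa using (hD.comp_hasDerivAt s hγ).clm_apply (hasDerivAt_const s w)

theorem exists_norm_sub_le_mul_norm (hf : IsRadialFlow U F x₀ y₀ h K f) {Λ : ℝ}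
    (hlip : ∀ x ∈ U, ∀ y₁ ∈ K, ∀ y₂ ∈ K, ‖F (x, y₁) - F (x, y₂)‖ ≤ Λ * ‖y₁ - y₂‖)
    {v : E} (hv : v ∈ ball (0 : E) 1) {t : ℝ} (ht : t ∈ Ico 0 h) {M L δ : ℝ} (hL : 0 ≤ L)
    (hδ : 0 < δ) (hM : ∀ s ∈ Icc 0 t, ‖F (radialCurve x₀ f v s)‖ ≤ M)
    (hLip : ∀ s ∈ Icc 0 t, ∀ p, ‖p - radialCurve x₀ f v s‖ ≤ δ →
      ‖F p - F (radialCurve x₀ f v s)‖ ≤ L * ‖p - radialCurve x₀ f v s‖) :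
    ∃ C ≥ 0, ∀ᶠ w in 𝓝 (0 : E), ∀ s ∈ Icc 0 t, ‖f (v + w) s - f v s‖ ≤ C * ‖w‖ := by
  have hIoo := Icc_subset_Ioo_neg_of_mem_Ico ht
  have hM0 : 0 ≤ M := (norm_nonneg _).trans (hM 0 ⟨le_rfl, ht.1⟩)
  have hLM : 0 ≤ L * t + M := by nlinarith [ht.1]
  refine ⟨(L * t + M) * gronwallBound 0 |Λ| 1 t,
    mul_nonneg hLM (gronwallBound_δ0_nonneg (abs_nonneg Λ) ht.1), ?_⟩
  have ht1 : 0 < t + 1 := by linarith [ht.1]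
  filter_upwards [eventually_add_mem_of_mem_nhds (isOpen_ball.mem_nhds hv),
    closedBall_mem_nhds (0 : E) (div_pos hδ ht1)] with w hvw hw
  have hw' : (t + 1) * ‖w‖ ≤ δ := by
    rw [mem_closedBall_zero_iff, le_div_iff₀ ht1] at hw
    linarith
  refine fun s hs => (norm_le_mul_gronwallBound_of_norm_deriv_le
    (g := fun s => f (v + w) s - f v s) (c := (L * t + M) * ‖w‖) (abs_nonneg Λ)
    (mul_nonneg hLM (norm_nonneg w))
    (fun s hs => (hf.hasDerivAt _ hvw s (hIoo hs)).sub (hf.hasDerivAt v hv s (hIoo hs)))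
    (by rw [hf.map_zero _ hvw, hf.map_zero v hv, sub_self]) (fun s hs => ?_) s hs).trans_eq
    (by ring)
  have hs' := hIoo (Ico_subset_Icc_self hs)
  have hshift : ‖(x₀ + s • (v + w), f v s) - radialCurve x₀ f v s‖ = s * ‖w‖ := by
    simp [radialCurve, smul_add, norm_smul, abs_of_nonneg hs.1, mul_nonneg hs.1 (norm_nonneg w)]
  have hsw : s * ‖w‖ ≤ t * ‖w‖ := mul_le_mul_of_nonneg_right hs.2.le (norm_nonneg w)
  calc ‖F (x₀ + s • (v + w), f (v + w) s) (v + w) - F (radialCurve x₀ f v s) v‖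
      ≤ ‖F (x₀ + s • (v + w), f (v + w) s) - F (x₀ + s • (v + w), f v s)‖
        + ‖F (x₀ + s • (v + w), f v s) - F (radialCurve x₀ f v s)‖
        + ‖F (radialCurve x₀ f v s)‖ * ‖w‖ :=
        norm_apply_add_sub_apply_le (mem_ball_zero_iff.1 hvw).le
    _ ≤ |Λ| * ‖f (v + w) s - f v s‖ + L * (s * ‖w‖) + M * ‖w‖ := by
        gcongr ?_ + ?_ + ?_
        · exact (hlip _ (hf.mem_dom _ hvw s hs') _ (hf.mem_K _ hvw s hs') _
            (hf.mem_K v hv s hs')).trans (by gcongr; exact le_abs_self Λ)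
        · rw [← hshift]
          exact hLip s (Ico_subset_Icc_self hs) _ (by nlinarith [norm_nonneg w])
        · exact mul_le_mul_of_nonneg_right (hM s (Ico_subset_Icc_self hs)) (norm_nonneg w)
    _ ≤ |Λ| * ‖f (v + w) s - f v s‖ + (L * t + M) * ‖w‖ := by
        linarith [mul_le_mul_of_nonneg_left hsw hL]

theorem hasFDerivAt_of_symm (hf : IsRadialFlow U F x₀ y₀ h K f) {v : E}
    (hv : v ∈ ball (0 : E) 1) {t : ℝ} (ht : t ∈ Ico 0 h) {C L M : ℝ} (hC0 : 0 ≤ C)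
    (hC : ∀ᶠ w in 𝓝 (0 : E), ∀ s ∈ Icc 0 t, ‖f (v + w) s - f v s‖ ≤ C * ‖w‖)
    (hM : ∀ s ∈ Icc 0 t, ‖F (radialCurve x₀ f v s)‖ ≤ M)
    (hL : ∀ s ∈ Icc 0 t, ‖fderiv ℝ F (radialCurve x₀ f v s)‖ ≤ L)
    (hF : ∀ s ∈ Icc 0 t,
      HasFDerivAt F (fderiv ℝ F (radialCurve x₀ f v s)) (radialCurve x₀ f v s))
    (htaylor : ∀ ε > 0, ∃ δ > 0, ∀ s ∈ Icc 0 t, ∀ p, ‖p - radialCurve x₀ f v s‖ ≤ δ →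
      ‖F p - F (radialCurve x₀ f v s) -
          fderiv ℝ F (radialCurve x₀ f v s) (p - radialCurve x₀ f v s)‖ ≤
        ε * ‖p - radialCurve x₀ f v s‖)
    (hsym : ∀ s ∈ Icc 0 t, ∀ v₁ v₂ : E,
      fderiv ℝ F (radialCurve x₀ f v s) (v₁, F (radialCurve x₀ f v s) v₁) v₂ =
        fderiv ℝ F (radialCurve x₀ f v s) (v₂, F (radialCurve x₀ f v s) v₂) v₁) :
    HasFDerivAt (fun v' => f v' t) (t • F (radialCurve x₀ f v t)) v := by
  have hIoo := Icc_subset_Ioo_neg_of_mem_Ico ht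
  have hball := eventually_add_mem_of_mem_nhds (isOpen_ball.mem_nhds hv)
  rw [hasFDerivAt_iff_isLittleO_nhds_zero]
  refine isLittleO_of_norm_deriv_le (g := radialDefect x₀ F f v)
    ((norm_nonneg (fderiv ℝ F _)).trans (hL 0 ⟨le_rfl, ht.1⟩)) ht.1 ?_ ?_
    (fun ε hε => eventually_norm_radialDefect_deriv_le hv ht.1 hC0 hC hM hL htaylor hsym hε)
  · filter_upwards [hball] with w hvw s hs
    exact ((hf.hasDerivAt _ hvw s (hIoo hs)).sub (hf.hasDerivAt v hv s (hIoo hs))).sub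
      (((hasDerivAt_id s).smul (hf.hasDerivAt_apply_radialCurve hv (hIoo hs) (hF s hs) w)
        ).congr_deriv (by simp [add_comm]))
  · filter_upwards [hball] with w hvw
    simp [radialDefect, hf.map_zero _ hvw, hf.map_zero v hv]

theorem hasFDerivAt_of_nonneg (hf : IsRadialFlow U F x₀ y₀ h K f) {V : Set E'} (hU : IsOpen U)
    (hV : IsOpen V) (hF : ContDiffOn ℝ 1 F (U ×ˢ V))
    (hint : ∀ x ∈ U, ∀ y ∈ V, ∀ v₁ v₂ : E,
      fderiv ℝ F (x, y) (v₁, F (x, y) v₁) v₂ = fderiv ℝ F (x, y) (v₂, F (x, y) v₂) v₁)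
    (hKV : K ⊆ V) {Λ : ℝ}
    (hlip : ∀ x ∈ U, ∀ y₁ ∈ K, ∀ y₂ ∈ K, ‖F (x, y₁) - F (x, y₂)‖ ≤ Λ * ‖y₁ - y₂‖)
    {v : E} (hv : v ∈ ball (0 : E) 1) {t : ℝ} (ht : t ∈ Ico 0 h) :
    HasFDerivAt (fun v' => f v' t) (t • F (radialCurve x₀ f v t)) v := by
  have hW : IsOpen (U ×ˢ V) := hU.prod hV
  set γ := radialCurve x₀ f v
  have hIoo := Icc_subset_Ioo_neg_of_mem_Ico ht
  have hγW : ∀ s ∈ Icc 0 t, γ s ∈ U ×ˢ V := fun s hs =>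
    ⟨hf.mem_dom v hv s (hIoo hs), hKV (hf.mem_K v hv s (hIoo hs))⟩
  have hP : IsCompact (γ '' Icc 0 t) :=
    isCompact_Icc.image_of_continuousOn ((hf.continuousOn_radialCurve hv).mono hIoo)
  have hPW : γ '' Icc 0 t ⊆ U ×ˢ V := image_subset_iff.2 hγW
  obtain ⟨M, hM⟩ := hP.exists_bound_of_continuousOn (hF.continuousOn.mono hPW)
  obtain ⟨L, hL⟩ := hP.exists_bound_of_continuousOn
    ((hF.continuousOn_fderiv_of_isOpen hW le_rfl).mono hPW)
  replace hM : ∀ s ∈ Icc 0 t, ‖F (γ s)‖ ≤ M := fun s hs => hM _ (mem_image_of_mem γ hs)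
  replace hL : ∀ s ∈ Icc 0 t, ‖fderiv ℝ F (γ s)‖ ≤ L := fun s hs => hL _ (mem_image_of_mem γ hs)
  have hL0 : 0 ≤ L := (norm_nonneg (fderiv ℝ F _)).trans (hL 0 ⟨le_rfl, ht.1⟩)
  have htaylor : ∀ ε > 0, ∃ δ > 0, ∀ s ∈ Icc 0 t, ∀ p, ‖p - γ s‖ ≤ δ →
      ‖F p - F (γ s) - fderiv ℝ F (γ s) (p - γ s)‖ ≤ ε * ‖p - γ s‖ := fun ε hε => by
    obtain ⟨δ, hδ, H⟩ := hP.exists_forall_norm_sub_sub_fderiv_le_s13 hW hF hPW hε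
    exact ⟨δ, hδ, fun s hs => H _ (mem_image_of_mem γ hs)⟩
  obtain ⟨δ, hδ, hδT⟩ := htaylor 1 one_pos
  obtain ⟨C, hC0, hC⟩ := hf.exists_norm_sub_le_mul_norm hlip hv ht (by linarith) hδ hM
    fun s hs p hp => norm_sub_le_of_norm_sub_sub_le (hL s hs) (hδT s hs p hp)
  exact hf.hasFDerivAt_of_symm hv ht hC0 hC hM hL
    (fun s hs => ((hF.differentiableOn one_ne_zero _ (hγW s hs)).differentiableAt
      (hW.mem_nhds (hγW s hs))).hasFDerivAt)
    htaylor (fun s hs => hint _ (hγW s hs).1 _ (hγW s hs).2)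

theorem hasFDerivAt (hf : IsRadialFlow U F x₀ y₀ h K f) {V : Set E'} (hU : IsOpen U)
    (hV : IsOpen V) (hF : ContDiffOn ℝ 1 F (U ×ˢ V))
    (hint : ∀ x ∈ U, ∀ y ∈ V, ∀ v₁ v₂ : E,
      fderiv ℝ F (x, y) (v₁, F (x, y) v₁) v₂ = fderiv ℝ F (x, y) (v₂, F (x, y) v₂) v₁)
    (hKV : K ⊆ V) {Λ : ℝ}
    (hlip : ∀ x ∈ U, ∀ y₁ ∈ K, ∀ y₂ ∈ K, ‖F (x, y₁) - F (x, y₂)‖ ≤ Λ * ‖y₁ - y₂‖)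
    {v : E} (hv : v ∈ ball (0 : E) 1) {t : ℝ} (ht : t ∈ Ioo (-h) h) :
    HasFDerivAt (fun v' => f v' t) (t • F (radialCurve x₀ f v t)) v := by
  rcases le_or_gt 0 t with ht0 | ht0
  · exact hf.hasFDerivAt_of_nonneg hU hV hF hint hKV hlip hv ⟨ht0, ht.2⟩
  · have H := (hf.comp_neg.hasFDerivAt_of_nonneg hU hV hF hint hKV hlip (v := -v)
      (by simpa using hv) (t := -t) ⟨by linarith, by linarith [ht.1]⟩).comp v
      (hasFDerivAt_id v).neg
    convert H using 1
    · funext v'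
      simp
    · ext w
      simp [radialCurve]

end IsRadialFlow

end RadialFlow

theorem frobenius_radial_derivative_formula_general (n m : ℕ)
    (U : Set (EuclideanSpace ℝ (Fin n))) (hU : IsOpen U)
    (V : Set (EuclideanSpace ℝ (Fin m))) (hV : IsOpen V)
    (F : EuclideanSpace ℝ (Fin n) × EuclideanSpace ℝ (Fin m) →
      (EuclideanSpace ℝ (Fin n) →L[ℝ] EuclideanSpace ℝ (Fin m)))
    (hF : ContDiffOn ℝ 1 F (U ×ˢ V))
    (hint : ∀ x ∈ U, ∀ y ∈ V, ∀ v₁ v₂ : EuclideanSpace ℝ (Fin n),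
      fderiv ℝ F (x, y) (v₁, F (x, y) v₁) v₂ =
      fderiv ℝ F (x, y) (v₂, F (x, y) v₂) v₁)
    (x₀ : EuclideanSpace ℝ (Fin n)) (y₀ : EuclideanSpace ℝ (Fin m))
    (h : ℝ)
    (K : Set (EuclideanSpace ℝ (Fin m))) (hKV : K ⊆ V)
    (Λ : ℝ)
    (hlip : ∀ x ∈ U, ∀ y₁ ∈ K, ∀ y₂ ∈ K, ‖F (x, y₁) - F (x, y₂)‖ ≤ Λ * ‖y₁ - y₂‖)
    (f : EuclideanSpace ℝ (Fin n) → ℝ → EuclideanSpace ℝ (Fin m))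
    (hdom : ∀ v ∈ ball (0 : EuclideanSpace ℝ (Fin n)) 1, ∀ t ∈ Ioo (-h) h,
      x₀ + t • v ∈ U)
    (hval : ∀ v ∈ ball (0 : EuclideanSpace ℝ (Fin n)) 1, ∀ t ∈ Ioo (-h) h,
      f v t ∈ K)
    (hic : ∀ v ∈ ball (0 : EuclideanSpace ℝ (Fin n)) 1, f v 0 = y₀)
    (hode : ∀ v ∈ ball (0 : EuclideanSpace ℝ (Fin n)) 1, ∀ t ∈ Ioo (-h) h,
      HasDerivAt (f v) (F (x₀ + t • v, f v t) v) t) :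
    ∀ v ∈ ball (0 : EuclideanSpace ℝ (Fin n)) 1, ∀ t ∈ Ioo (-h) h,
      HasFDerivAt (fun v' => f v' t) (t • F (x₀ + t • v, f v t)) v :=
  fun _ hv _ ht =>
    IsRadialFlow.hasFDerivAt ⟨hdom, hval, hic, hode⟩ hU hV hF hint hKV hlip hv ht

theorem frobenius_radial_derivative_formula (n m : ℕ)
    (U : Set (EuclideanSpace ℝ (Fin n))) (hU : IsOpen U)
    (V : Set (EuclideanSpace ℝ (Fin m))) (hV : IsOpen V)
    (F : EuclideanSpace ℝ (Fin n) × EuclideanSpace ℝ (Fin m) →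
      (EuclideanSpace ℝ (Fin n) →L[ℝ] EuclideanSpace ℝ (Fin m)))
    (hF : ContDiffOn ℝ 1 F (U ×ˢ V))
    (hint : ∀ x ∈ U, ∀ y ∈ V, ∀ v₁ v₂ : EuclideanSpace ℝ (Fin n),
      fderiv ℝ F (x, y) (v₁, F (x, y) v₁) v₂ =
      fderiv ℝ F (x, y) (v₂, F (x, y) v₂) v₁)
    (x₀ : EuclideanSpace ℝ (Fin n)) (y₀ : EuclideanSpace ℝ (Fin m))
    (hx₀ : x₀ ∈ U) (hy₀ : y₀ ∈ V)
    (h : ℝ) (hh : 0 < h)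
    (K : Set (EuclideanSpace ℝ (Fin m))) (hK : IsCompact K) (hKV : K ⊆ V)
    (Λ : ℝ)
    (hlip : ∀ x ∈ U, ∀ y₁ ∈ K, ∀ y₂ ∈ K, ‖F (x, y₁) - F (x, y₂)‖ ≤ Λ * ‖y₁ - y₂‖)
    (f : EuclideanSpace ℝ (Fin n) → ℝ → EuclideanSpace ℝ (Fin m))
    (hdom : ∀ v ∈ ball (0 : EuclideanSpace ℝ (Fin n)) 1, ∀ t ∈ Ioo (-h) h,
      x₀ + t • v ∈ U)
    (hval : ∀ v ∈ ball (0 : EuclideanSpace ℝ (Fin n)) 1, ∀ t ∈ Ioo (-h) h,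
      f v t ∈ K)
    (hic : ∀ v ∈ ball (0 : EuclideanSpace ℝ (Fin n)) 1, f v 0 = y₀)
    (hode : ∀ v ∈ ball (0 : EuclideanSpace ℝ (Fin n)) 1, ∀ t ∈ Ioo (-h) h,
      HasDerivAt (f v) (F (x₀ + t • v, f v t) v) t) :
    ∀ v ∈ ball (0 : EuclideanSpace ℝ (Fin n)) 1, ∀ t ∈ Ioo (-h) h,
      HasFDerivAt (fun v' => f v' t) (t • F (x₀ + t • v, f v t)) v :=
  frobenius_radial_derivative_formula_general n m U hU V hV F hF hint x₀ y₀ h K hKV Λ hlip f hdom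
    hval hic hode
end

section
/- Under the hypotheses of the previous statement (F C¹ on U × V satisfying the integrability condition, f(v,t) the radial solution family with f(v,0) = y₀ and ∂_v f(v,t)(w) = F(x₀+tv, f(v,t))(tw)), fix r ∈ (0,h) and define u(x) := f((x−x₀)/r, r) for x ∈ B_{λr}(x₀), λ ∈ (0,1). Then u is C¹ and solves the total differential equation Du(x) = F(x, u(x)) with u(x₀) = y₀. -/
open Set Metric

/-!
On the ball `B(x₀, λr)` the point `v = (x - x₀)/r` stays in the unit ball, so `u = f(·, r)` composed
with this homothety is differentiable by the chain rule, with derivative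
`∂_v f(v, r) ∘ r⁻¹ = (r • F(x₀ + r v, f(v, r))) ∘ r⁻¹ = F(x, u(x))`. This derivative is continuous
because `F` is, so `u` is `C¹`. Finally `u(x₀) = f(0, r) = y₀`, since along the ray `v = 0` the ODE
reads `∂_t f(0, t) = F(x₀, f(0, t))(0) = 0`.
-/

section

variable {𝕜 E G : Type*} [NontriviallyNormedField 𝕜] [NormedAddCommGroup E] [NormedSpace 𝕜 E]
  [NormedAddCommGroup G] [NormedSpace 𝕜 G]

theorem contDiffOn_one_of_hasFDerivAt {f : E → G} {f' : E → E →L[𝕜] G} {s : Set E}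
    (hs : IsOpen s) (hf : ∀ x ∈ s, HasFDerivAt f (f' x) x) (hf' : ContinuousOn f' s) :
    ContDiffOn 𝕜 1 f s := fun _ hx =>
  (contDiffAt_one_iff.2 ⟨f', s, hs.mem_nhds hx, hf', hf⟩).contDiffWithinAt

theorem HasFDerivAt.comp_inv_smul_sub {g : E → G} {L : E →L[𝕜] G} {r : 𝕜} (hr : r ≠ 0)
    {x₀ x : E} (hg : HasFDerivAt g (r • L) (r⁻¹ • (x - x₀))) :
    HasFDerivAt (fun x => g (r⁻¹ • (x - x₀))) L x := by
  have hlin : HasFDerivAt (fun x : E => r⁻¹ • (x - x₀)) (r⁻¹ • ContinuousLinearMap.id 𝕜 E) x :=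
    ((hasFDerivAt_id x).sub_const x₀).const_smul r⁻¹
  have hL : (r • L).comp (r⁻¹ • ContinuousLinearMap.id 𝕜 E) = L := by
    ext w
    simp [inv_smul_smul₀ hr]
  rw [← hL]
  exact hg.comp x hlin

end

theorem inv_smul_sub_mem_ball_zero_one {E : Type*} [NormedAddCommGroup E] [NormedSpace ℝ E]
    {x₀ x : E} {r : ℝ} (hr : 0 < r) (hx : x ∈ ball x₀ r) : r⁻¹ • (x - x₀) ∈ ball (0 : E) 1 := by
  rw [mem_ball_iff_norm, sub_zero, norm_smul, norm_inv, Real.norm_of_nonneg hr.le,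
    inv_mul_lt_one₀ hr]
  exact mem_ball_iff_norm.1 hx

theorem frobenius_local_existence_general (n m : ℕ)
    (U : Set (EuclideanSpace ℝ (Fin n)))
    (V : Set (EuclideanSpace ℝ (Fin m)))
    (F : EuclideanSpace ℝ (Fin n) × EuclideanSpace ℝ (Fin m) →
      (EuclideanSpace ℝ (Fin n) →L[ℝ] EuclideanSpace ℝ (Fin m)))
    (hF : ContDiffOn ℝ 1 F (U ×ˢ V))
    (x₀ : EuclideanSpace ℝ (Fin n)) (y₀ : EuclideanSpace ℝ (Fin m))
    (h : ℝ)
    (f : EuclideanSpace ℝ (Fin n) → ℝ → EuclideanSpace ℝ (Fin m))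
    (hdom : ∀ v ∈ ball (0 : EuclideanSpace ℝ (Fin n)) 1, ∀ t ∈ Ioo (-h) h,
      x₀ + t • v ∈ U)
    (hmap : ∀ v ∈ ball (0 : EuclideanSpace ℝ (Fin n)) 1, ∀ t ∈ Ioo (-h) h,
      f v t ∈ V)
    (hic : ∀ v ∈ ball (0 : EuclideanSpace ℝ (Fin n)) 1, f v 0 = y₀)
    (hode : ∀ v ∈ ball (0 : EuclideanSpace ℝ (Fin n)) 1, ∀ t ∈ Ioo (-h) h,
      HasDerivAt (f v) (F (x₀ + t • v, f v t) v) t)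
    (hpar : ∀ v ∈ ball (0 : EuclideanSpace ℝ (Fin n)) 1, ∀ t ∈ Ioo (-h) h,
      HasFDerivAt (fun v' => f v' t) (t • F (x₀ + t • v, f v t)) v)
    (r lam : ℝ) (hr : r ∈ Ioo 0 h) (hlam : lam ∈ Ioo (0:ℝ) 1) :
    ContDiffOn ℝ 1 (fun x => f (r⁻¹ • (x - x₀)) r) (ball x₀ (lam * r)) ∧
    (∀ x ∈ ball x₀ (lam * r),
      HasFDerivAt (fun x' => f (r⁻¹ • (x' - x₀)) r)
        (F (x, f (r⁻¹ • (x - x₀)) r)) x) ∧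
    f (r⁻¹ • (x₀ - x₀)) r = y₀ := by
  obtain ⟨hr0, hrh⟩ := hr
  have hrI : r ∈ Ioo (-h) h := ⟨by linarith, hrh⟩
  have hv : ∀ x ∈ ball x₀ (lam * r), r⁻¹ • (x - x₀) ∈ ball 0 1 := fun x hx =>
    inv_smul_sub_mem_ball_zero_one hr0
      (ball_subset_ball (mul_le_of_le_one_left hr0.le hlam.2.le) hx)
  have hray : ∀ x, x₀ + r • r⁻¹ • (x - x₀) = x := fun x => by
    rw [smul_inv_smul₀ hr0.ne', add_sub_cancel]
  have hu : ∀ x ∈ ball x₀ (lam * r), HasFDerivAt (fun x' => f (r⁻¹ • (x' - x₀)) r)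
      (F (x, f (r⁻¹ • (x - x₀)) r)) x := fun x hx =>
    HasFDerivAt.comp_inv_smul_sub hr0.ne' (by simpa only [hray] using hpar _ (hv x hx) r hrI)
  have hFu : ContinuousOn (fun x => F (x, f (r⁻¹ • (x - x₀)) r)) (ball x₀ (lam * r)) :=
    hF.continuousOn.comp
      (continuousOn_id.prodMk fun x hx => (hu x hx).continuousAt.continuousWithinAt)
      fun x hx => ⟨by simpa only [hray] using hdom _ (hv x hx) r hrI, hmap _ (hv x hx) r hrI⟩
  refine ⟨contDiffOn_one_of_hasFDerivAt isOpen_ball hu hFu, hu, ?_⟩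
  have h0 : (0 : EuclideanSpace ℝ (Fin n)) ∈ ball 0 1 := mem_ball_self one_pos
  rw [sub_self, smul_zero, ← hic 0 h0]
  exact isOpen_Ioo.is_const_of_deriv_eq_zero isPreconnected_Ioo
    (fun t ht => (hode 0 h0 t ht).differentiableAt.differentiableWithinAt)
    (fun t ht => (hode 0 h0 t ht).deriv.trans (map_zero _)) hrI ⟨by linarith, by linarith⟩

theorem frobenius_local_existence (n m : ℕ)
    (U : Set (EuclideanSpace ℝ (Fin n))) (hU : IsOpen U)
    (V : Set (EuclideanSpace ℝ (Fin m))) (hV : IsOpen V)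
    (F : EuclideanSpace ℝ (Fin n) × EuclideanSpace ℝ (Fin m) →
      (EuclideanSpace ℝ (Fin n) →L[ℝ] EuclideanSpace ℝ (Fin m)))
    (hF : ContDiffOn ℝ 1 F (U ×ˢ V))
    (hint : ∀ x ∈ U, ∀ y ∈ V, ∀ v₁ v₂ : EuclideanSpace ℝ (Fin n),
      fderiv ℝ F (x, y) (v₁, F (x, y) v₁) v₂ =
      fderiv ℝ F (x, y) (v₂, F (x, y) v₂) v₁)
    (x₀ : EuclideanSpace ℝ (Fin n)) (y₀ : EuclideanSpace ℝ (Fin m))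
    (hx₀ : x₀ ∈ U) (hy₀ : y₀ ∈ V)
    (h : ℝ) (hh : 0 < h)
    (f : EuclideanSpace ℝ (Fin n) → ℝ → EuclideanSpace ℝ (Fin m))
    (hdom : ∀ v ∈ ball (0 : EuclideanSpace ℝ (Fin n)) 1, ∀ t ∈ Ioo (-h) h,
      x₀ + t • v ∈ U)
    (hmap : ∀ v ∈ ball (0 : EuclideanSpace ℝ (Fin n)) 1, ∀ t ∈ Ioo (-h) h,
      f v t ∈ V)
    (hic : ∀ v ∈ ball (0 : EuclideanSpace ℝ (Fin n)) 1, f v 0 = y₀)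
    (hode : ∀ v ∈ ball (0 : EuclideanSpace ℝ (Fin n)) 1, ∀ t ∈ Ioo (-h) h,
      HasDerivAt (f v) (F (x₀ + t • v, f v t) v) t)
    (hpar : ∀ v ∈ ball (0 : EuclideanSpace ℝ (Fin n)) 1, ∀ t ∈ Ioo (-h) h,
      HasFDerivAt (fun v' => f v' t) (t • F (x₀ + t • v, f v t)) v)
    (r lam : ℝ) (hr : r ∈ Ioo 0 h) (hlam : lam ∈ Ioo (0:ℝ) 1) :
    ContDiffOn ℝ 1 (fun x => f (r⁻¹ • (x - x₀)) r) (ball x₀ (lam * r)) ∧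
    (∀ x ∈ ball x₀ (lam * r),
      HasFDerivAt (fun x' => f (r⁻¹ • (x' - x₀)) r)
        (F (x, f (r⁻¹ • (x - x₀)) r)) x) ∧
    f (r⁻¹ • (x₀ - x₀)) r = y₀ :=
  frobenius_local_existence_general n m U V F hF x₀ y₀ h f hdom hmap hic hode hpar r lam hr hlam
end

section
/- Let a < b, and for each ε ∈ (0,1] let u_ε, v_ε : [a,b] → ℝⁿ be continuous with u_ε(t_ε) = v_ε(t_ε) + ñ_ε for some t_ε ∈ [a,b], where for every m ∈ ℕ, |ñ_ε| = O(ε^m). Suppose |u_ε(t) − v_ε(t)| ≤ |ñ_ε| + ∫ over [min(t_ε,t), max(t_ε,t)] of (|n_ε(s)| + Λ_ε |u_ε(s) − v_ε(s)|) ds, where sup_s |n_ε(s)| = O(ε^m) for every m and Λ_ε ≤ C₃ + C₄|log ε|. Then for every m ∈ ℕ, sup_{t∈[a,b]} |u_ε(t) − v_ε(t)| = O(ε^m) as ε → 0. -/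
/-!
Write `w = ‖u_ε - v_ε‖`, `L = max Λ_ε 0` and `A = ‖ñ_ε‖ + (b - a) sup ‖n_ε‖`. Bounding the forcing
term by its supremum turns the hypothesis into `w t ≤ A + L ∫_{[t_ε, t]} w`, and Grönwall's
inequality, applied on each side of `t_ε`, gives `w ≤ A e^{L (b - a)}`. Since
`L ≤ C₃ + C₄ |log ε|`, the exponential factor is at most `e^{C₃ (b - a)} ε^{-M}` for any natural
`M ≥ C₄ (b - a)`; choosing `A = O(ε^{m + M})` then yields `w = O(ε^m)`.
-/

open Set MeasureTheory
open Real

theorem le_mul_exp_of_le_add_mul_integral_right {w : ℝ → ℝ} {t₀ b A L : ℝ} (hw : Continuous w)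
    (hL : 0 ≤ L) (h : ∀ t ∈ Icc t₀ b, w t ≤ A + L * ∫ s in t₀..t, w s) :
    ∀ t ∈ Icc t₀ b, w t ≤ A * exp (L * (t - t₀)) := by
  -- `G' = L w ≤ L G` with `G t₀ = A`, and `w ≤ G`.
  set G : ℝ → ℝ := fun t => A + L * ∫ s in t₀..t, w s
  have hG : ∀ x, HasDerivAt G (L * w x) x := fun x =>
    ((intervalIntegral.integral_hasDerivAt_right (hw.intervalIntegrable _ _)
      hw.stronglyMeasurable.stronglyMeasurableAtFilter hw.continuousAt).const_mul L).const_add A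
  have hG_le : ∀ t ∈ Icc t₀ b, G t ≤ gronwallBound A L 0 (t - t₀) :=
    le_gronwallBound_of_liminf_deriv_right_le (fun x _ => (hG x).continuousAt.continuousWithinAt)
      (fun x _ _ hr => (hG x).hasDerivWithinAt.liminf_right_slope_le hr) (by simp [G])
      (fun x hx => by simpa using mul_le_mul_of_nonneg_left (h x (Ico_subset_Icc_self hx)) hL)
  intro t ht
  calc w t ≤ G t := h t ht
    _ ≤ A * exp (L * (t - t₀)) := by simpa only [gronwallBound_ε0] using hG_le t ht

theorem le_mul_exp_of_le_add_mul_integral_left {w : ℝ → ℝ} {a t₀ A L : ℝ} (hw : Continuous w)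
    (hL : 0 ≤ L) (h : ∀ t ∈ Icc a t₀, w t ≤ A + L * ∫ s in t..t₀, w s) :
    ∀ t ∈ Icc a t₀, w t ≤ A * exp (L * (t₀ - t)) := by
  intro t ht
  have hreflected := le_mul_exp_of_le_add_mul_integral_right (w := fun s => w (-s))
    (t₀ := -t₀) (b := -a) (A := A) (hw.comp continuous_neg) hL (fun s hs => ?_) (-t)
    ⟨neg_le_neg ht.2, neg_le_neg ht.1⟩
  · simpa [sub_eq_add_neg, add_comm] using hreflected
  · rw [intervalIntegral.integral_comp_neg, neg_neg]
    exact h (-s) ⟨le_neg.mpr hs.2, neg_le.mpr hs.1⟩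

theorem setIntegral_uIcc_eq_intervalIntegral_of_le {f : ℝ → ℝ} {a b : ℝ} (hab : a ≤ b) :
    ∫ s in uIcc a b, f s = ∫ s in a..b, f s := by
  rw [uIcc_of_le hab, integral_Icc_eq_integral_Ioc, intervalIntegral.integral_of_le hab]

theorem le_mul_exp_of_le_add_mul_setIntegral_uIcc {w : ℝ → ℝ} {a b t₀ A L : ℝ}
    (hw : ContinuousOn w (Icc a b)) (ht₀ : t₀ ∈ Icc a b) (hL : 0 ≤ L)
    (h : ∀ t ∈ Icc a b, w t ≤ A + L * ∫ s in uIcc t₀ t, w s) :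
    ∀ t ∈ Icc a b, w t ≤ A * exp (L * |t - t₀|) := by
  have hab : a ≤ b := ht₀.1.trans ht₀.2
  set w' : ℝ → ℝ := fun t => w (projIcc a b hab t)
  have hw' : Continuous w' :=
    hw.comp_continuous (continuous_subtype_val.comp continuous_projIcc) fun t => Subtype.mem _
  have hw'_eq : EqOn w' w (Icc a b) := fun t ht => by simp only [w', projIcc_of_mem hab ht]
  have h' : ∀ t ∈ Icc a b, w' t ≤ A + L * ∫ s in uIcc t₀ t, w' s := fun t ht => by
    rw [hw'_eq ht, setIntegral_congr_fun measurableSet_uIcc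
      (hw'_eq.mono (uIcc_subset_Icc ht₀ ht))]
    exact h t ht
  intro t ht
  rw [← hw'_eq ht]
  rcases le_total t₀ t with hle | hle
  · rw [abs_of_nonneg (sub_nonneg.mpr hle)]
    refine le_mul_exp_of_le_add_mul_integral_right hw' hL (fun s hs => ?_) t ⟨hle, ht.2⟩
    rw [← setIntegral_uIcc_eq_intervalIntegral_of_le hs.1]
    exact h' s ⟨ht₀.1.trans hs.1, hs.2⟩
  · rw [abs_of_nonpos (sub_nonpos.mpr hle), neg_sub]
    refine le_mul_exp_of_le_add_mul_integral_left hw' hL (fun s hs => ?_) t ⟨ht.1, hle⟩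
    rw [← setIntegral_uIcc_eq_intervalIntegral_of_le hs.2, uIcc_comm]
    exact h' s ⟨hs.1, hs.2.trans ht₀.2⟩

theorem setIntegral_le_setIntegral_of_le_of_nonneg {α : Type*} [MeasurableSpace α] {μ : Measure α}
    {s : Set α} {f g : α → ℝ} (hs : MeasurableSet s) (hg : IntegrableOn g s μ)
    (hg₀ : ∀ x ∈ s, 0 ≤ g x) (hfg : ∀ x ∈ s, f x ≤ g x) :
    ∫ x in s, f x ∂μ ≤ ∫ x in s, g x ∂μ := by
  by_cases hf : IntegrableOn f s μ
  · exact setIntegral_mono_on hf hg hs hfg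
  · rw [integral_undef hf]
    exact setIntegral_nonneg hs hg₀

theorem le_mul_exp_of_le_add_setIntegral_uIcc {w f : ℝ → ℝ} {a b t₀ A B Λ : ℝ}
    (hw : ContinuousOn w (Icc a b)) (hw₀ : ∀ t ∈ Icc a b, 0 ≤ w t) (ht₀ : t₀ ∈ Icc a b)
    (hB : 0 ≤ B) (hf : ∀ s ∈ Icc a b, f s ≤ B)
    (h : ∀ t ∈ Icc a b, w t ≤ A + ∫ s in uIcc t₀ t, (f s + Λ * w s)) :
    ∀ t ∈ Icc a b, w t ≤ (A + (b - a) * B) * exp (max Λ 0 * (b - a)) := by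
  set L := max Λ 0
  have hL : 0 ≤ L := le_max_right _ _
  have hdist : ∀ t ∈ Icc a b, |t - t₀| ≤ b - a := fun t ht =>
    abs_sub_le_iff.mpr ⟨by linarith [ht.2, ht₀.1], by linarith [ht.1, ht₀.2]⟩
  have hlinear : ∀ t ∈ Icc a b, w t ≤ (A + (b - a) * B) + L * ∫ s in uIcc t₀ t, w s := by
    intro t ht
    have hsub : uIcc t₀ t ⊆ Icc a b := uIcc_subset_Icc ht₀ ht
    have hw_int : IntegrableOn w (uIcc t₀ t) := (hw.mono hsub).integrableOn_uIcc
    have hB_int : IntegrableOn (fun _ => B) (uIcc t₀ t) := continuousOn_const.integrableOn_uIcc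
    have hforcing : ∫ s in uIcc t₀ t, (f s + Λ * w s) ≤ ∫ s in uIcc t₀ t, (B + L * w s) :=
      setIntegral_le_setIntegral_of_le_of_nonneg measurableSet_uIcc
        (hB_int.add (hw_int.const_mul L))
        (fun s hs => add_nonneg hB (mul_nonneg hL (hw₀ s (hsub hs))))
        (fun s hs => add_le_add (hf s (hsub hs))
          (mul_le_mul_of_nonneg_right (le_max_left _ _) (hw₀ s (hsub hs))))
    have hsplit : ∫ s in uIcc t₀ t, (B + L * w s) = |t - t₀| * B + L * ∫ s in uIcc t₀ t, w s := by
      rw [integral_add hB_int (hw_int.const_mul L), setIntegral_const,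
        Real.volume_real_interval, smul_eq_mul, integral_const_mul]
    have hdrift := mul_le_mul_of_nonneg_right (hdist t ht) hB
    linarith [h t ht]
  intro t ht
  have hgronwall := le_mul_exp_of_le_add_mul_setIntegral_uIcc hw ht₀ hL hlinear t ht
  have hA : 0 ≤ A + (b - a) * B :=
    nonneg_of_mul_nonneg_left ((hw₀ t ht).trans hgronwall) (exp_pos _)
  exact hgronwall.trans (by gcongr; exact hdist t ht)

theorem exp_mul_abs_log_le_inv_pow {ε c : ℝ} {M : ℕ} (hε : ε ∈ Ioc 0 1) (hM : c ≤ M) :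
    exp (c * |log ε|) ≤ (ε ^ M)⁻¹ := by
  have hlog : |log ε| = -log ε := abs_of_nonpos (log_nonpos hε.1.le hε.2)
  calc exp (c * |log ε|) ≤ exp (M * |log ε|) :=
        exp_le_exp.mpr (mul_le_mul_of_nonneg_right hM (abs_nonneg _))
    _ = (ε ^ M)⁻¹ := by
        rw [hlog, mul_neg, exp_neg, exp_nat_mul, exp_log hε.1]

theorem exp_mul_le_exp_mul_mul_inv_pow {Λ C₃ C₄ D ε : ℝ} {M : ℕ} (hC₃ : 0 ≤ C₃) (hC₄ : 0 ≤ C₄)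
    (hD : 0 ≤ D) (hε : ε ∈ Ioc 0 1) (hΛ : Λ ≤ C₃ + C₄ * |log ε|) (hM : C₄ * D ≤ M) :
    exp (max Λ 0 * D) ≤ exp (C₃ * D) * (ε ^ M)⁻¹ := by
  have hmax : max Λ 0 ≤ C₃ + C₄ * |log ε| := max_le hΛ (by positivity)
  calc exp (max Λ 0 * D) ≤ exp (C₃ * D) * exp (C₄ * D * |log ε|) := by
        rw [← exp_add]
        exact exp_le_exp.mpr (by nlinarith)
    _ ≤ exp (C₃ * D) * (ε ^ M)⁻¹ := by gcongr; exact exp_mul_abs_log_le_inv_pow hε hM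

theorem negligible_difference_of_solutions_general (n : ℕ) (a b : ℝ) (hab : a < b)
    (C₃ C₄ : ℝ) (hC₃ : 0 ≤ C₃) (hC₄ : 0 ≤ C₄)
    (u v : ℝ → ℝ → EuclideanSpace ℝ (Fin n))
    (tc : ℝ → ℝ) (htc : ∀ ε ∈ Ioc (0:ℝ) 1, tc ε ∈ Icc a b)
    (ntil : ℝ → EuclideanSpace ℝ (Fin n))
    (nn : ℝ → ℝ → EuclideanSpace ℝ (Fin n))
    (Λ : ℝ → ℝ)
    (hu : ∀ ε ∈ Ioc (0:ℝ) 1, ContinuousOn (u ε) (Icc a b))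
    (hv : ∀ ε ∈ Ioc (0:ℝ) 1, ContinuousOn (v ε) (Icc a b))
    (hntil : ∀ m : ℕ, ∃ C > 0, ∃ ε₀ ∈ Ioc (0:ℝ) 1, ∀ ε ∈ Ioc (0:ℝ) ε₀,
      ‖ntil ε‖ ≤ C * ε ^ m)
    (hnn : ∀ m : ℕ, ∃ C > 0, ∃ ε₀ ∈ Ioc (0:ℝ) 1, ∀ ε ∈ Ioc (0:ℝ) ε₀,
      ∀ s ∈ Icc a b, ‖nn ε s‖ ≤ C * ε ^ m)
    (hΛ : ∀ ε ∈ Ioc (0:ℝ) 1, Λ ε ≤ C₃ + C₄ * |Real.log ε|)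
    (hineq : ∀ ε ∈ Ioc (0:ℝ) 1, ∀ t ∈ Icc a b,
      ‖u ε t - v ε t‖ ≤ ‖ntil ε‖ +
        ∫ s in uIcc (tc ε) t, (‖nn ε s‖ + Λ ε * ‖u ε s - v ε s‖)) :
    ∀ m : ℕ, ∃ C > 0, ∃ ε₀ ∈ Ioc (0:ℝ) 1, ∀ ε ∈ Ioc (0:ℝ) ε₀,
      ∀ t ∈ Icc a b, ‖u ε t - v ε t‖ ≤ C * ε ^ m := by
  intro m
  have hD : 0 ≤ b - a := sub_nonneg.mpr hab.le
  obtain ⟨M, hM⟩ := exists_nat_ge (C₄ * (b - a))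
  obtain ⟨C₁, hC₁, ε₁, hε₁, hntil⟩ := hntil (m + M)
  obtain ⟨C₂, hC₂, ε₂, hε₂, hnn⟩ := hnn (m + M)
  refine ⟨(C₁ + (b - a) * C₂) * exp (C₃ * (b - a)), by positivity, min ε₁ ε₂,
    ⟨lt_min hε₁.1 hε₂.1, (min_le_left _ _).trans hε₁.2⟩, ?_⟩
  rintro ε ⟨hε₀, hε_min⟩ t ht
  have hε : ε ∈ Ioc 0 1 := ⟨hε₀, hε_min.trans ((min_le_left _ _).trans hε₁.2)⟩
  have hε₂' : ε ∈ Ioc 0 ε₂ := ⟨hε₀, hε_min.trans (min_le_right _ _)⟩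
  have hgronwall := le_mul_exp_of_le_add_setIntegral_uIcc ((hu ε hε).sub (hv ε hε)).norm
    (fun _ _ => norm_nonneg _) (htc ε hε) (by positivity) (hnn ε hε₂') (hineq ε hε) t ht
  calc ‖u ε t - v ε t‖
      ≤ (‖ntil ε‖ + (b - a) * (C₂ * ε ^ (m + M))) * exp (max (Λ ε) 0 * (b - a)) := hgronwall
    _ ≤ ((C₁ + (b - a) * C₂) * ε ^ (m + M)) * (exp (C₃ * (b - a)) * (ε ^ M)⁻¹) := by
        gcongr
        · linarith [hntil ε ⟨hε₀, hε_min.trans (min_le_left _ _)⟩]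
        · exact exp_mul_le_exp_mul_mul_inv_pow hC₃ hC₄ hD hε (hΛ ε hε) hM
    _ = (C₁ + (b - a) * C₂) * exp (C₃ * (b - a)) * ε ^ m := by
        field_simp
        ring

theorem negligible_difference_of_solutions (n : ℕ) (a b : ℝ) (hab : a < b)
    (C₃ C₄ : ℝ) (hC₃ : 0 ≤ C₃) (hC₄ : 0 ≤ C₄)
    (u v : ℝ → ℝ → EuclideanSpace ℝ (Fin n))
    (tc : ℝ → ℝ) (htc : ∀ ε ∈ Ioc (0:ℝ) 1, tc ε ∈ Icc a b)
    (ntil : ℝ → EuclideanSpace ℝ (Fin n))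
    (nn : ℝ → ℝ → EuclideanSpace ℝ (Fin n))
    (Λ : ℝ → ℝ)
    (hu : ∀ ε ∈ Ioc (0:ℝ) 1, ContinuousOn (u ε) (Icc a b))
    (hv : ∀ ε ∈ Ioc (0:ℝ) 1, ContinuousOn (v ε) (Icc a b))
    (hinit : ∀ ε ∈ Ioc (0:ℝ) 1, u ε (tc ε) = v ε (tc ε) + ntil ε)
    (hntil : ∀ m : ℕ, ∃ C > 0, ∃ ε₀ ∈ Ioc (0:ℝ) 1, ∀ ε ∈ Ioc (0:ℝ) ε₀,
      ‖ntil ε‖ ≤ C * ε ^ m)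
    (hnn : ∀ m : ℕ, ∃ C > 0, ∃ ε₀ ∈ Ioc (0:ℝ) 1, ∀ ε ∈ Ioc (0:ℝ) ε₀,
      ∀ s ∈ Icc a b, ‖nn ε s‖ ≤ C * ε ^ m)
    (hΛ : ∀ ε ∈ Ioc (0:ℝ) 1, Λ ε ≤ C₃ + C₄ * |Real.log ε|)
    (hineq : ∀ ε ∈ Ioc (0:ℝ) 1, ∀ t ∈ Icc a b,
      ‖u ε t - v ε t‖ ≤ ‖ntil ε‖ +
        ∫ s in uIcc (tc ε) t, (‖nn ε s‖ + Λ ε * ‖u ε s - v ε s‖)) :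
    ∀ m : ℕ, ∃ C > 0, ∃ ε₀ ∈ Ioc (0:ℝ) 1, ∀ ε ∈ Ioc (0:ℝ) ε₀,
      ∀ t ∈ Icc a b, ‖u ε t - v ε t‖ ≤ C * ε ^ m :=
  negligible_difference_of_solutions_general n a b hab C₃ C₄ hC₃ hC₄ u v tc htc ntil nn Λ hu hv
    hntil hnn hΛ hineq
end
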